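/- arXiv:1306.3301 — 6 statements merged into one kernel-verified Lean document; each statement's English description precedes it below -/
import Mathlib

section
/- Let φ be a probability density on [0,1) satisfying φ(x) ~ c_φ(1-x)^β as x→1⁻ with c_φ > 0 and 0 < β < 1, and let σ² > 0. Then, as the integer t → ∞, σ² ∫₀¹ x^t/(1-x²) φ(x) dx ~ σ² (c_φ/2) Γ(β) t^{-β}, i.e. the ratio of the left-hand side to σ² (c_φ/2) Γ(β) t^{-β} tends to 1. -/
/-!
With `ψ(x) = φ(x) / (1 - x²)` the covariance is the `t`-th moment `∫₀¹ xᵗ ψ(x) dx`, and the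
hypothesis on `φ` says `ψ(x) ~ (c_φ / 2) (1 - x)^(β - 1)` as `x → 1⁻`. Moments only see the
behaviour of the density near `1`: the part of `[0, 1)` below any `a < 1` contributes `O(aᵗ)`,
which is negligible against the polynomially decaying moments of `(1 - x)^(β - 1)`. These are
Beta integrals `B(t + 1, β) = t! / (β (β + 1) ⋯ (β + t))`, and `t^β B(t + 1, β)` is exactly
Gauss's sequence `GammaSeq β t → Γ(β)`.
-/

open MeasureTheory Filter Topology Asymptotics Set

theorem rpow_mul_integral_pow_mul_one_sub_rpow_eq_GammaSeq {β : ℝ} (hβ : 0 < β) (t : ℕ) :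
    (t : ℝ) ^ β * ∫ x in Ico (0 : ℝ) 1, x ^ t * (1 - x) ^ (β - 1) = Real.GammaSeq β t := by
  have hB : Complex.betaIntegral (t + 1) β =
      ((∫ x in (0 : ℝ)..1, x ^ t * (1 - x) ^ (β - 1) : ℝ) : ℂ) := by
    rw [Complex.betaIntegral, ← intervalIntegral.integral_ofReal]
    refine intervalIntegral.integral_congr fun x hx => ?_
    rw [uIcc_of_le zero_le_one] at hx
    have h1x : 0 ≤ 1 - x := sub_nonneg.mpr hx.2
    simp only [add_sub_cancel_right, Complex.cpow_natCast]
    push_cast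
    rw [Complex.ofReal_cpow h1x]
    push_cast
    ring
  have hval : Complex.betaIntegral (t + 1) β =
      t.factorial / ∏ j ∈ Finset.range (t + 1), ((β : ℂ) + j) := by
    rw [← Complex.betaIntegral_symm,
      Complex.betaIntegral_eval_nat_add_one_right (by simpa using hβ) t]
  have hreal : ∫ x in (0 : ℝ)..1, x ^ t * (1 - x) ^ (β - 1) =
      t.factorial / ∏ j ∈ Finset.range (t + 1), (β + j) := by
    exact_mod_cast hB.symm.trans hval
  rw [integral_Ico_eq_integral_Ioo, ← integral_Ioc_eq_integral_Ioo,
    ← intervalIntegral.integral_of_le zero_le_one, hreal, Real.GammaSeq, mul_div_assoc]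

theorem isEquivalent_integral_pow_mul_const_mul_one_sub_rpow (c : ℝ) {β : ℝ} (hβ : 0 < β) :
    (fun t : ℕ => ∫ x in Ico (0 : ℝ) 1, x ^ t * (c * (1 - x) ^ (β - 1))) ~[atTop]
      fun t => c * Real.Gamma β * (t : ℝ) ^ (-β) := by
  have hB : (fun t : ℕ => ∫ x in Ico (0 : ℝ) 1, x ^ t * (1 - x) ^ (β - 1)) ~[atTop]
      fun t => Real.Gamma β * (t : ℝ) ^ (-β) := by
    refine isEquivalent_of_tendsto_one ?_
    rw [← div_self (Real.Gamma_pos_of_pos hβ).ne']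
    refine ((Real.GammaSeq_tendsto_Gamma β).div_const (Real.Gamma β)).congr' ?_
    filter_upwards [eventually_gt_atTop 0] with t ht
    have ht' : (0 : ℝ) < t := Nat.cast_pos.mpr ht
    rw [← rpow_mul_integral_pow_mul_one_sub_rpow_eq_GammaSeq hβ, Pi.div_apply,
      Real.rpow_neg ht'.le]
    field_simp
  refine ((IsEquivalent.refl (u := fun _ : ℕ => c)).mul hB).congr_left ?_ |>.congr_right ?_
  · filter_upwards with t
    simp only [Pi.mul_apply, ← integral_const_mul, mul_left_comm c]
  · filter_upwards with t
    simp only [Pi.mul_apply, mul_assoc]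

theorem isLittleO_pow_rpow_neg {a : ℝ} (ha₀ : 0 < a) (ha₁ : a < 1) (β : ℝ) :
    (fun t : ℕ => a ^ t) =o[atTop] fun t => (t : ℝ) ^ (-β) := by
  have h := (isLittleO_exp_neg_mul_rpow_atTop (neg_pos.mpr (Real.log_neg ha₀ ha₁)) (-β))
    |>.comp_tendsto tendsto_natCast_atTop_atTop
  refine h.congr_left fun t => ?_
  simp only [Function.comp_apply, neg_neg, mul_comm (Real.log a), Real.exp_nat_mul,
    Real.exp_log ha₀]

theorem integrableOn_Ico_one_sub_rpow {β : ℝ} (hβ : 0 < β) :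
    IntegrableOn (fun x : ℝ => (1 - x) ^ (β - 1)) (Ico 0 1) := by
  have h := (intervalIntegral.intervalIntegrable_rpow' (by linarith : -1 < β - 1)
    (a := 0) (b := 1)).comp_sub_left 1
  rw [sub_zero, sub_self, IntervalIntegrable.symm_iff,
    intervalIntegrable_iff_integrableOn_Ioo_of_le zero_le_one] at h
  exact (integrableOn_Ico_iff_integrableOn_Ioo).mpr h

theorem MeasureTheory.IntegrableOn.pow_mul_Ico {f : ℝ → ℝ} (hf : IntegrableOn f (Ico 0 1))
    (t : ℕ) :
    IntegrableOn (fun x => x ^ t * f x) (Ico 0 1) :=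
  hf.bdd_mul (c := 1) (by fun_prop) <| ae_restrict_of_forall_mem measurableSet_Ico fun x hx => by
    rw [norm_pow, Real.norm_of_nonneg hx.1]
    exact pow_le_one₀ hx.1 hx.2.le

theorem isEquivalent_integral_pow_mul {f g : ℝ → ℝ}
    (hf : IntegrableOn f (Ico 0 1)) (hg : IntegrableOn g (Ico 0 1))
    (hg₀ : ∀ x ∈ Ico (0 : ℝ) 1, 0 ≤ g x) (hfg : f ~[𝓝[<] 1] g)
    (hdecay : ∀ a ∈ Ioo (0 : ℝ) 1,
      (fun t : ℕ => a ^ t) =o[atTop] fun t => ∫ x in Ico 0 1, x ^ t * g x) :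
    (fun t : ℕ => ∫ x in Ico 0 1, x ^ t * f x) ~[atTop]
      fun t => ∫ x in Ico 0 1, x ^ t * g x := by
  refine IsLittleO.isEquivalent (isLittleO_iff.mpr fun ε hε => ?_)
  obtain ⟨a, ha₁, ha⟩ := mem_nhdsLT_iff_exists_Ioo_subset.mp
    (isLittleO_iff.mp hfg.isLittleO (half_pos hε))
  set a' := max a (1 / 2)
  have ha' : a' ∈ Ioo (0 : ℝ) 1 := ⟨by positivity, max_lt ha₁ (by norm_num)⟩
  set C := ∫ x in Ico 0 1, |f x - g x|
  filter_upwards [isLittleO_iff.mp ((hdecay a' ha').const_mul_left C) (half_pos hε)] with t ht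
  -- below `a'` the weight `x ^ t` is at most `a' ^ t`, above it `f` is within `ε / 2` of `g`
  have hpt : ∀ x ∈ Ico (0 : ℝ) 1,
      x ^ t * |f x - g x| ≤ ε / 2 * (x ^ t * g x) + a' ^ t * |f x - g x| := by
    intro x hx
    rcases le_or_gt x a' with hxa | hxa
    · have := pow_le_pow_left₀ hx.1 hxa t
      have := mul_nonneg (hg₀ x hx) (pow_nonneg hx.1 t)
      nlinarith [abs_nonneg (f x - g x)]
    · have hx' := ha ⟨(le_max_left a _).trans_lt hxa, hx.2⟩
      simp only [mem_ofPred_eq, Pi.sub_apply, Real.norm_eq_abs, abs_of_nonneg (hg₀ x hx)] at hx'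
      nlinarith [pow_nonneg hx.1 t, pow_nonneg ha'.1.le t, abs_nonneg (f x - g x)]
  have hdiff : IntegrableOn (fun x => |f x - g x|) (Ico 0 1) := (hf.sub hg).abs
  have hv : 0 ≤ ∫ x in Ico 0 1, x ^ t * g x :=
    setIntegral_nonneg measurableSet_Ico fun x hx => mul_nonneg (pow_nonneg hx.1 t) (hg₀ x hx)
  simp only [Pi.sub_apply, Real.norm_eq_abs, abs_of_nonneg hv, norm_mul, norm_pow] at ht ⊢
  rw [abs_of_nonneg ha'.1.le] at ht
  calc |(∫ x in Ico 0 1, x ^ t * f x) - ∫ x in Ico 0 1, x ^ t * g x|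
      = |∫ x in Ico 0 1, x ^ t * (f x - g x)| := by
        rw [← integral_sub (hf.pow_mul_Ico t) (hg.pow_mul_Ico t)]
        simp only [mul_sub]
    _ ≤ ∫ x in Ico 0 1, x ^ t * |f x - g x| := by
        refine (abs_integral_le_integral_abs).trans_eq (setIntegral_congr_fun measurableSet_Ico
          fun x hx => ?_)
        rw [abs_mul, abs_of_nonneg (pow_nonneg hx.1 t)]
    _ ≤ ∫ x in Ico 0 1, (ε / 2 * (x ^ t * g x) + a' ^ t * |f x - g x|) :=
        setIntegral_mono_on (hdiff.pow_mul_Ico t)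
          (((hg.pow_mul_Ico t).const_mul _).add (hdiff.const_mul _))
          measurableSet_Ico hpt
    _ = ε / 2 * (∫ x in Ico 0 1, x ^ t * g x) + a' ^ t * C := by
        rw [integral_add ((hg.pow_mul_Ico t).const_mul _) (hdiff.const_mul _),
          integral_const_mul, integral_const_mul]
    _ ≤ ε * ∫ x in Ico 0 1, x ^ t * g x := by
        nlinarith [le_abs_self C, pow_nonneg ha'.1.le t]

theorem integrableOn_Ico_of_isBigO_nhdsLT {f g : ℝ → ℝ} {a b : ℝ} (hab : a < b)
    (hf : ∀ c < b, IntegrableOn f (Ico a c))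
    (hfm : AEStronglyMeasurable f (volume.restrict (Ico a b)))
    (hfg : f =O[𝓝[<] b] g) (hg : IntegrableOn g (Ico a b)) : IntegrableOn f (Ico a b) := by
  obtain ⟨s, hs, hfs⟩ := hfg.integrableAtFilter ⟨Ico a b, Ico_mem_nhdsLT hab, hfm⟩
    ⟨Ico a b, Ico_mem_nhdsLT hab, hg⟩
  obtain ⟨c, hc, hcs⟩ := mem_nhdsLT_iff_exists_Ioo_subset.mp hs
  obtain ⟨d, hcd, hdb⟩ := exists_between (show c < b from hc)
  refine ((hf d hdb).union (hfs.mono_set hcs)).mono_set fun x hx => ?_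
  rcases lt_or_ge x d with hxd | hxd
  · exact Or.inl ⟨hx.1, hxd⟩
  · exact Or.inr ⟨hcd.trans_le hxd, hx.2⟩

theorem isEquivalent_div_one_sub_sq_nhdsLT {φ : ℝ → ℝ} {c β : ℝ} (hc : c ≠ 0)
    (hφ : Tendsto (fun x => φ x / (c * (1 - x) ^ β)) (𝓝[<] 1) (𝓝 1)) :
    (fun x => φ x / (1 - x ^ 2)) ~[𝓝[<] 1] fun x => c / 2 * (1 - x) ^ (β - 1) := by
  have h2 : Tendsto (fun x : ℝ => 2 / (1 + x)) (𝓝[<] 1) (𝓝 1) := by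
    have : ContinuousAt (fun x : ℝ => 2 / (1 + x)) 1 := by fun_prop (disch := norm_num)
    simpa [show (2:ℝ) / (1 + 1) = 1 by norm_num] using this.tendsto.mono_left nhdsWithin_le_nhds
  refine isEquivalent_of_tendsto_one ((one_mul (1 : ℝ) ▸ hφ.mul h2).congr' ?_)
  filter_upwards [Ioo_mem_nhdsLT (show (-1 : ℝ) < 1 by norm_num)] with x hx
  have h1x : 0 < 1 - x := sub_pos.mpr hx.2
  have h1x' : 0 < 1 + x := by linarith [hx.1]
  rw [Pi.div_apply, show β = β - 1 + 1 by ring, Real.rpow_add_one h1x.ne', add_sub_cancel_right]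
  have := Real.rpow_pos_of_pos h1x (β - 1)
  rw [show 1 - x ^ 2 = (1 - x) * (1 + x) by ring]
  field_simp

theorem integrableOn_Ico_div_one_sub_sq {φ g : ℝ → ℝ} (hφ : IntegrableOn φ (Ico 0 1))
    (hφg : (fun x => φ x / (1 - x ^ 2)) =O[𝓝[<] 1] g) (hg : IntegrableOn g (Ico 0 1)) :
    IntegrableOn (fun x => φ x / (1 - x ^ 2)) (Ico 0 1) := by
  refine integrableOn_Ico_of_isBigO_nhdsLT one_pos (fun d hd => ?_)
    (hφ.aestronglyMeasurable.div₀ (by fun_prop)) hφg hg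
  simp only [div_eq_mul_inv]
  refine (hφ.mono_set (Ico_subset_Ico_right hd.le)).mul_continuousOn_of_subset
    (K := Icc 0 d) ?_ measurableSet_Ico isCompact_Icc Ico_subset_Icc_self
  refine ContinuousOn.inv₀ (by fun_prop) fun x hx => ?_
  nlinarith [hx.1, hx.2]

theorem aggregated_AR1_covariance_asymptotics_general
    (φ : ℝ → ℝ) (cφ β σ2 : ℝ) (hc : 0 < cφ) (hβ0 : 0 < β) (hσ : 0 < σ2)
    (hprob : ∫ x in Set.Ico (0:ℝ) 1, φ x = 1)
    (hasymp : Tendsto (fun x => φ x / (cφ * (1 - x) ^ β)) (𝓝[<] (1:ℝ)) (𝓝 1)) :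
    Tendsto (fun t : ℕ =>
        (σ2 * ∫ x in Set.Ico (0:ℝ) 1, x ^ t / (1 - x ^ 2) * φ x) /
          (σ2 * (cφ / 2) * Real.Gamma β * (t : ℝ) ^ (-β)))
      atTop (𝓝 1) := by
  have hφ : IntegrableOn φ (Ico 0 1) := Integrable.of_integral_ne_zero (by rw [hprob]; simp)
  have hg : IntegrableOn (fun x => cφ / 2 * (1 - x) ^ (β - 1)) (Ico 0 1) :=
    (integrableOn_Ico_one_sub_rpow hβ0).const_mul _
  have hg₀ : ∀ x ∈ Ico (0 : ℝ) 1, 0 ≤ cφ / 2 * (1 - x) ^ (β - 1) := fun x hx => by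
    have := Real.rpow_nonneg (sub_nonneg.mpr hx.2.le) (β - 1)
    positivity
  have hψg := isEquivalent_div_one_sub_sq_nhdsLT hc.ne' hasymp
  have hmoments := isEquivalent_integral_pow_mul_const_mul_one_sub_rpow (cφ / 2) hβ0
  have hK : cφ / 2 * Real.Gamma β ≠ 0 := by have := Real.Gamma_pos_of_pos hβ0; positivity
  have hdecay : ∀ a ∈ Ioo (0 : ℝ) 1, (fun t : ℕ => a ^ t) =o[atTop]
      fun t => ∫ x in Ico 0 1, x ^ t * (cφ / 2 * (1 - x) ^ (β - 1)) := fun a ha =>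
    ((isLittleO_pow_rpow_neg ha.1 ha.2 β).const_mul_right' hK.isUnit).trans_isEquivalent
      hmoments.symm
  have key := (isEquivalent_integral_pow_mul (integrableOn_Ico_div_one_sub_sq hφ hψg.isBigO hg)
    hg hg₀ hψg hdecay).trans hmoments
  rw [isEquivalent_iff_tendsto_one] at key
  · refine key.congr fun t => ?_
    rw [Pi.div_apply, ← mul_div_mul_left _ _ hσ.ne']
    congr 1
    · simp only [div_mul_eq_mul_div, mul_div_assoc]
    · ring
  · filter_upwards [eventually_gt_atTop 0] with t ht
    have := Real.rpow_pos_of_pos (Nat.cast_pos.mpr ht : (0 : ℝ) < t) (-β)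
    positivity

/-- Covariance asymptotics of the random-coefficient AR(1) process:
if the mixing density `φ` satisfies `φ(x) ~ c_φ (1-x)^β` as `x → 1⁻` with `0 < β < 1`,
then `σ² ∫₀¹ x^t/(1-x²) φ(x) dx ~ σ² (c_φ/2) Γ(β) t^{-β}` as the integer `t → ∞`. -/
theorem aggregated_AR1_covariance_asymptotics
    (φ : ℝ → ℝ) (cφ β σ2 : ℝ) (hc : 0 < cφ) (hβ0 : 0 < β) (hβ1 : β < 1) (hσ : 0 < σ2)
    (hmeas : Measurable φ)
    (hnonneg : ∀ x ∈ Set.Ico (0:ℝ) 1, 0 ≤ φ x)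
    (hprob : ∫ x in Set.Ico (0:ℝ) 1, φ x = 1)
    (hasymp : Tendsto (fun x => φ x / (cφ * (1 - x) ^ β)) (𝓝[<] (1:ℝ)) (𝓝 1)) :
    Tendsto (fun t : ℕ =>
        (σ2 * ∫ x in Set.Ico (0:ℝ) 1, x ^ t / (1 - x ^ 2) * φ x) /
          (σ2 * (cφ / 2) * Real.Gamma β * (t : ℝ) ^ (-β)))
      atTop (𝓝 1) :=
  aggregated_AR1_covariance_asymptotics_general φ cφ β σ2 hc hβ0 hσ hprob hasymp
end

section
/- Let φ be a probability density on [0,1) satisfying φ(x) ~ c_φ(1-x)^β as x→1⁻ with c_φ > 0 and 0 < β < 1, and let σ² > 0. Define f(y) = (σ²/(2π)) ∫₀¹ φ(x)/((1-x)² + 4x sin²(y/2)) dx for y ∈ (0,π]. Then lim_{y→0⁺} y^{1-β} f(y) = c_f, where c_f = (σ² c_φ/(2π)) ∫₀^∞ w^β/(w²+1) dw. -/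
/-!
With `s = 2 sin (y / 2)` the kernel becomes `1 / ((1 - x)² + x s²)`, and `y / s → 1`, so it suffices
to show `s^{1-β} ∫₀¹ φ x / ((1 - x)² + x s²) dx → c_φ ∫₀^∞ w^β / (w² + 1) dw` as `s → 0⁺`.
On `[0, 1 - δ)` the kernel is at most `δ⁻²`, so that part is killed by `s^{1-β} → 0`. On
`[1 - δ, 1)` the substitution `x = 1 - s w` gives `∫₀^{δ/s} w^β g(s w) / (w² + 1 - s w) dw` with
`g t = φ (1 - t) / t^β → c_φ`; for `δ` small `g` is bounded on `(0, δ]`, and dominated convergence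
with majorant `w^β / (w² + 1)` finishes.
-/

open MeasureTheory Filter Topology Set Real

theorem integrableOn_rpow_div_sq_add_one {β : ℝ} (hβ0 : -1 < β) (hβ1 : β < 1) :
    IntegrableOn (fun w : ℝ => w ^ β / (w ^ 2 + 1)) (Ioi 0) := by
  have hmeas : AEStronglyMeasurable (fun w : ℝ => w ^ β / (w ^ 2 + 1)) :=
    (by fun_prop : Measurable fun w : ℝ => w ^ β / (w ^ 2 + 1)).aestronglyMeasurable
  rw [← Ioc_union_Ioi_eq_Ioi zero_le_one]
  refine IntegrableOn.union ?_ ?_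
  · have hpow : IntegrableOn (fun w : ℝ => w ^ β) (Ioc 0 1) :=
      (intervalIntegrable_iff_integrableOn_Ioc_of_le zero_le_one).1
        (intervalIntegral.intervalIntegrable_rpow' hβ0)
    refine hpow.mono' hmeas.restrict ?_
    filter_upwards [ae_restrict_mem measurableSet_Ioc] with w hw
    have hwβ : 0 < w ^ β := rpow_pos_of_pos hw.1 β
    rw [norm_of_nonneg (by positivity)]
    exact div_le_self hwβ.le (by nlinarith)
  · refine (integrableOn_Ioi_rpow_of_lt (by linarith : β - 2 < -1) zero_lt_one).mono'
      hmeas.restrict ?_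
    filter_upwards [ae_restrict_mem measurableSet_Ioi] with w (hw : 1 < w)
    have hw0 : 0 < w := zero_lt_one.trans hw
    rw [norm_of_nonneg (by positivity), rpow_sub hw0, rpow_two]
    exact div_le_div_of_nonneg_left (by positivity) (by positivity) (by linarith)

theorem one_sub_sq_add_mul_sq_pos {x s : ℝ} (hx0 : 0 ≤ x) (hx1 : x ≤ 1) (hs : s ≠ 0) :
    0 < (1 - x) ^ 2 + x * s ^ 2 := by
  rcases hx1.lt_or_eq with hx1 | rfl
  · have : 0 < 1 - x := by linarith
    positivity
  · simpa using pow_two_pos_of_ne_zero hs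

theorem integrableOn_div_one_sub_sq_add_mul_sq {φ : ℝ → ℝ} (hφ : IntegrableOn φ (Ico 0 1))
    {s : ℝ} (hs : s ≠ 0) :
    IntegrableOn (fun x => φ x / ((1 - x) ^ 2 + x * s ^ 2)) (Ico 0 1) := by
  have hcont : ContinuousOn (fun x : ℝ => ((1 - x) ^ 2 + x * s ^ 2)⁻¹) (Icc 0 1) :=
    (by fun_prop : Continuous fun x : ℝ => (1 - x) ^ 2 + x * s ^ 2).continuousOn.inv₀
      fun x hx => (one_sub_sq_add_mul_sq_pos hx.1 hx.2 hs).ne'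
  simpa only [div_eq_mul_inv] using
    hφ.mul_continuousOn_of_subset hcont measurableSet_Ico isCompact_Icc Ico_subset_Icc_self

theorem tendsto_rpow_mul_setIntegral_Ico_zero_sub {φ : ℝ → ℝ} {β δ : ℝ} (hβ : β < 1) (hδ : 0 < δ)
    (hφ : IntegrableOn φ (Ico 0 (1 - δ))) :
    Tendsto (fun s : ℝ => s ^ (1 - β) * ∫ x in Ico 0 (1 - δ), φ x / ((1 - x) ^ 2 + x * s ^ 2))
      (𝓝[>] 0) (𝓝 0) := by
  have hpow : Tendsto (fun s : ℝ => s ^ (1 - β)) (𝓝[>] 0) (𝓝 0) := by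
    have := (continuousAt_rpow_const 0 (1 - β) (Or.inr (by linarith))).tendsto
    rw [zero_rpow (by linarith)] at this
    exact this.mono_left nhdsWithin_le_nhds
  refine hpow.zero_mul_isBoundedUnder_le
    (isBoundedUnder_of ⟨(∫ x in Ico 0 (1 - δ), ‖φ x‖) / δ ^ 2, fun s => ?_⟩)
  rw [Function.comp_apply, ← integral_div]
  refine norm_integral_le_of_norm_le (hφ.norm.div_const _) ?_
  filter_upwards [ae_restrict_mem measurableSet_Ico] with x hx
  have hδx : δ ≤ 1 - x := by linarith [hx.2]
  have hD : δ ^ 2 ≤ (1 - x) ^ 2 + x * s ^ 2 := by nlinarith [hx.1, sq_nonneg s]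
  rw [norm_div, norm_of_nonneg ((sq_nonneg δ).trans hD)]
  exact div_le_div_of_nonneg_left (norm_nonneg _) (by positivity) hD

theorem rpow_mul_setIntegral_Ico_one_sub_eq {φ : ℝ → ℝ} {β δ s : ℝ} (hδ0 : 0 ≤ δ) (hδ1 : δ ≤ 1)
    (hs : 0 < s) :
    s ^ (1 - β) * ∫ x in Ico (1 - δ) 1, φ x / ((1 - x) ^ 2 + x * s ^ 2) =
      ∫ w in Ioc 0 (δ / s), w ^ β * (φ (1 - s * w) / (s * w) ^ β) / (w ^ 2 + 1 - s * w) := by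
  set F := fun x => φ x / ((1 - x) ^ 2 + x * s ^ 2)
  have hsubst : ∫ x in Ico (1 - δ) 1, F x = s * ∫ w in (0)..(δ / s), F (1 - s * w) := by
    rw [intervalIntegral.integral_comp_sub_mul F hs.ne', mul_zero, sub_zero,
      mul_div_cancel₀ _ hs.ne', smul_eq_mul, mul_inv_cancel_left₀ hs.ne',
      intervalIntegral.integral_of_le (by linarith), integral_Ico_eq_integral_Ioc]
  rw [hsubst, intervalIntegral.integral_of_le (by positivity), ← mul_assoc, ← integral_const_mul]
  refine setIntegral_congr_fun measurableSet_Ioc fun w hw => ?_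
  have hsw : s * w ≤ δ := (le_div_iff₀' hs).1 hw.2
  have hD : 0 < w ^ 2 + 1 - s * w := by nlinarith [hw.1]
  have hsβ : 0 < s ^ β := rpow_pos_of_pos hs β
  have hwβ : 0 < w ^ β := rpow_pos_of_pos hw.1 β
  have hden : (1 - (1 - s * w)) ^ 2 + (1 - s * w) * s ^ 2 = s ^ 2 * (w ^ 2 + 1 - s * w) := by ring
  simp only [F, hden]
  rw [mul_rpow hs.le hw.1.le, rpow_sub hs, rpow_one]
  field_simp

theorem tendsto_setIntegral_Ioc_rescaled {g : ℝ → ℝ} {β δ M L : ℝ} (hβ0 : -1 < β) (hβ1 : β < 1)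
    (hδ0 : 0 < δ) (hδ1 : δ < 1) (hg_meas : Measurable g) (hg_bdd : ∀ t ∈ Ioc 0 δ, |g t| ≤ M)
    (hg : Tendsto g (𝓝[>] 0) (𝓝 L)) :
    Tendsto (fun s : ℝ => ∫ w in Ioc 0 (δ / s), w ^ β * g (s * w) / (w ^ 2 + 1 - s * w))
      (𝓝[>] 0) (𝓝 (L * ∫ w in Ioi 0, w ^ β / (w ^ 2 + 1))) := by
  set F : ℝ → ℝ → ℝ := fun s =>
    (Ioc 0 (δ / s)).indicator fun w => w ^ β * g (s * w) / (w ^ 2 + 1 - s * w)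
  have hF : ∀ s, ∫ w in Ioc 0 (δ / s), w ^ β * g (s * w) / (w ^ 2 + 1 - s * w) =
      ∫ w in Ioi 0, F s w := fun s => by
    rw [setIntegral_indicator measurableSet_Ioc, inter_eq_right.2 Ioc_subset_Ioi_self]
  have hM : 0 ≤ M := (abs_nonneg _).trans (hg_bdd δ ⟨hδ0, le_rfl⟩)
  simp only [hF, ← integral_const_mul]
  refine tendsto_integral_filter_of_dominated_convergence
    (fun w => M / (1 - δ) * (w ^ β / (w ^ 2 + 1))) ?_ ?_
    ((integrableOn_rpow_div_sq_add_one hβ0 hβ1).const_mul _) ?_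
  · exact Eventually.of_forall fun s =>
      (Measurable.indicator (by fun_prop) measurableSet_Ioc).aestronglyMeasurable
  · filter_upwards [self_mem_nhdsWithin] with s (hs : 0 < s)
    filter_upwards [ae_restrict_mem measurableSet_Ioi] with w (hw : 0 < w)
    have hwβ : 0 < w ^ β := rpow_pos_of_pos hw β
    simp only [F, indicator_apply]
    split_ifs with hsw
    · have hsw : s * w ≤ δ := (le_div_iff₀' hs).1 hsw.2
      have hD : (1 - δ) * (w ^ 2 + 1) ≤ w ^ 2 + 1 - s * w := by nlinarith
      have hDpos : 0 < w ^ 2 + 1 - s * w := by nlinarith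
      rw [Real.norm_eq_abs, abs_div, abs_mul, abs_of_pos hwβ, abs_of_pos hDpos]
      calc w ^ β * |g (s * w)| / (w ^ 2 + 1 - s * w)
          ≤ w ^ β * M / ((1 - δ) * (w ^ 2 + 1)) := by
            gcongr
            exact hg_bdd _ ⟨by positivity, hsw⟩
        _ = M / (1 - δ) * (w ^ β / (w ^ 2 + 1)) := by field_simp
    · rw [norm_zero]
      have : 0 < 1 - δ := by linarith
      positivity
  · filter_upwards [ae_restrict_mem measurableSet_Ioi] with w (hw : 0 < w)
    have hsw : Tendsto (fun s => s * w) (𝓝[>] 0) (𝓝[>] 0) := by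
      simpa only [mul_comm] using tendsto_comap.mono_left (comap_mulLeft_nhdsGT_zero hw).ge
    have hF_eq : (fun s => w ^ β * g (s * w) / (w ^ 2 + 1 - s * w)) =ᶠ[𝓝[>] 0] fun s => F s w := by
      filter_upwards [Ioo_mem_nhdsGT (div_pos hδ0 hw)] with s hs
      have hmem : w ∈ Ioc 0 (δ / s) := ⟨hw, (le_div_iff₀' hs.1).2 ((lt_div_iff₀ hw).1 hs.2).le⟩
      exact (indicator_of_mem hmem fun w => w ^ β * g (s * w) / (w ^ 2 + 1 - s * w)).symm
    refine Tendsto.congr' hF_eq ?_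
    have hlim : Tendsto (fun s => w ^ β * g (s * w) / (w ^ 2 + 1 - s * w)) (𝓝[>] 0)
        (𝓝 (w ^ β * L / (w ^ 2 + 1 - 0 * w))) :=
      ((hg.comp hsw).const_mul _).div
        ((tendsto_const_nhds.sub (tendsto_id.mul_const w)).mono_left nhdsWithin_le_nhds)
        (by rw [zero_mul, sub_zero]; positivity)
    convert hlim using 2
    ring

theorem tendsto_div_rpow_one_sub {φ : ℝ → ℝ} {c β : ℝ} (hc : c ≠ 0)
    (h : Tendsto (fun x => φ x / (c * (1 - x) ^ β)) (𝓝[<] 1) (𝓝 1)) :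
    Tendsto (fun t => φ (1 - t) / t ^ β) (𝓝[>] 0) (𝓝 c) := by
  have hreflect : Tendsto (fun t : ℝ => 1 - t) (𝓝[>] 0) (𝓝[<] 1) := by
    refine tendsto_nhdsWithin_iff.2 ⟨?_, ?_⟩
    · simpa using ((continuous_sub_left (1 : ℝ)).tendsto 0).mono_left nhdsWithin_le_nhds
    · filter_upwards [self_mem_nhdsWithin] with t (ht : 0 < t)
      simpa using ht
  have := (h.comp hreflect).const_mul c
  rw [mul_one] at this
  refine this.congr fun t => ?_
  simp only [Function.comp_apply, sub_sub_cancel]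
  rw [mul_comm c, div_mul_eq_div_div, div_right_comm, div_mul_cancel₀ _ hc]

theorem tendsto_rpow_mul_setIntegral_div_one_sub_sq_add_mul_sq {φ : ℝ → ℝ} {β L : ℝ}
    (hβ0 : -1 < β) (hβ1 : β < 1) (hmeas : Measurable φ) (hφ : IntegrableOn φ (Ico 0 1))
    (hasymp : Tendsto (fun t => φ (1 - t) / t ^ β) (𝓝[>] 0) (𝓝 L)) :
    Tendsto (fun s : ℝ => s ^ (1 - β) * ∫ x in Ico 0 1, φ x / ((1 - x) ^ 2 + x * s ^ 2))
      (𝓝[>] 0) (𝓝 (L * ∫ w in Ioi 0, w ^ β / (w ^ 2 + 1))) := by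
  obtain ⟨δ, hδ0, hδ1, hbdd⟩ :
      ∃ δ, 0 < δ ∧ δ < 1 ∧ ∀ t ∈ Ioc 0 δ, |φ (1 - t) / t ^ β| ≤ |L| + 1 := by
    obtain ⟨u, hu, hsub⟩ := mem_nhdsGT_iff_exists_Ioc_subset.1
      (hasymp.abs.eventually (eventually_le_nhds (lt_add_one |L|)))
    exact ⟨min u (1 / 2), lt_min hu one_half_pos, min_lt_of_right_lt one_half_lt_one,
      fun t ht => hsub ⟨ht.1, ht.2.trans (min_le_left _ _)⟩⟩
  have hnear := tendsto_setIntegral_Ioc_rescaled hβ0 hβ1 hδ0 hδ1 (by fun_prop) hbdd hasymp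
  have hfar := tendsto_rpow_mul_setIntegral_Ico_zero_sub hβ1 hδ0
    (hφ.mono_set (Ico_subset_Ico_right (by linarith)))
  rw [← zero_add (L * _)]
  refine (hfar.add hnear).congr' ?_
  filter_upwards [self_mem_nhdsWithin] with s (hs : 0 < s)
  have hint := integrableOn_div_one_sub_sq_add_mul_sq hφ hs.ne'
  rw [← rpow_mul_setIntegral_Ico_one_sub_eq hδ0.le hδ1.le hs, ← mul_add,
    ← setIntegral_union Ico_disjoint_Ico_same measurableSet_Ico
      (hint.mono_set (Ico_subset_Ico_right (by linarith)))
      (hint.mono_set (Ico_subset_Ico_left (by linarith))),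
    Ico_union_Ico_eq_Ico (by linarith) (by linarith)]

theorem two_mul_sin_half_eq_mul_sinc (y : ℝ) : 2 * sin (y / 2) = y * sinc (y / 2) := by
  rcases eq_or_ne y 0 with rfl | hy
  · simp
  · rw [sinc_of_ne_zero (by positivity)]
    field_simp

theorem tendsto_two_mul_sin_half_nhdsGT :
    Tendsto (fun y : ℝ => 2 * sin (y / 2)) (𝓝[>] 0) (𝓝[>] 0) := by
  refine tendsto_nhdsWithin_iff.2 ⟨?_, ?_⟩
  · simpa using ((by fun_prop : Continuous fun y : ℝ => 2 * sin (y / 2)).tendsto 0).mono_left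
      nhdsWithin_le_nhds
  · filter_upwards [Ioo_mem_nhdsGT two_pi_pos] with y hy
    have := sin_pos_of_pos_of_lt_pi (half_pos hy.1) (by linarith [hy.2])
    exact mul_pos two_pos this

theorem aggregated_AR1_spectral_density_asymptotics_general
    (φ : ℝ → ℝ) (cφ β σ2 : ℝ) (hc : 0 < cφ) (hβ0 : 0 < β) (hβ1 : β < 1)
    (hmeas : Measurable φ)
    (hprob : ∫ x in Set.Ico (0:ℝ) 1, φ x = 1)
    (hasymp : Filter.Tendsto (fun x => φ x / (cφ * (1 - x) ^ β)) (𝓝[<] (1:ℝ)) (𝓝 1)) :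
    Tendsto (fun y : ℝ =>
        y ^ (1 - β) *
          (σ2 / (2 * Real.pi) *
            ∫ x in Set.Ico (0:ℝ) 1, φ x / ((1 - x) ^ 2 + 4 * x * Real.sin (y / 2) ^ 2)))
      (𝓝[>] (0:ℝ))
      (𝓝 (σ2 * cφ / (2 * Real.pi) * ∫ w in Set.Ioi (0:ℝ), w ^ β / (w ^ 2 + 1))) := by
  have hφ : IntegrableOn φ (Ico 0 1) := Integrable.of_integral_ne_zero (by simp [hprob])
  have hscaled := (tendsto_rpow_mul_setIntegral_div_one_sub_sq_add_mul_sq (by linarith) hβ1 hmeas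
    hφ (tendsto_div_rpow_one_sub hc.ne' hasymp)).comp tendsto_two_mul_sin_half_nhdsGT
  have hsinc : Tendsto (fun y : ℝ => sinc (y / 2) ^ (1 - β)) (𝓝[>] 0) (𝓝 1) := by
    have := ((continuous_sinc.comp (continuous_id.div_const 2)).tendsto 0).rpow_const
      (p := 1 - β) (Or.inl (by simp))
    simpa using this.mono_left nhdsWithin_le_nhds
  convert ((hscaled.const_mul (σ2 / (2 * π))).div hsinc one_ne_zero).congr' ?_ using 2
  · ring
  filter_upwards [Ioo_mem_nhdsGT two_pi_pos] with y hy
  have hsinc_pos : 0 < sinc (y / 2) := by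
    rw [sinc_of_ne_zero (by linarith [hy.1])]
    exact div_pos (sin_pos_of_pos_of_lt_pi (half_pos hy.1) (by linarith [hy.2])) (half_pos hy.1)
  have hsq : ∀ x : ℝ, x * (2 * sin (y / 2)) ^ 2 = 4 * x * sin (y / 2) ^ 2 := fun x => by ring
  simp only [Pi.div_apply, Function.comp_apply]
  simp only [hsq]
  generalize ∫ x in Ico 0 1, φ x / ((1 - x) ^ 2 + 4 * x * sin (y / 2) ^ 2) = I
  rw [two_mul_sin_half_eq_mul_sinc, mul_rpow hy.1.le hsinc_pos.le]
  field_simp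

/-- Low-frequency power-law behavior of the aggregated AR(1) spectral density:
if the mixing density satisfies `φ(x) ~ c_φ (1-x)^β` as `x → 1⁻` with `0 < β < 1`, then
`y^{1-β} f(y) → c_f = (σ² c_φ/(2π)) ∫₀^∞ w^β/(w²+1) dw` as `y → 0⁺`, where
`f(y) = (σ²/(2π)) ∫₀¹ φ(x)/((1-x)² + 4x sin²(y/2)) dx`. -/
theorem aggregated_AR1_spectral_density_asymptotics
    (φ : ℝ → ℝ) (cφ β σ2 : ℝ) (hc : 0 < cφ) (hβ0 : 0 < β) (hβ1 : β < 1) (hσ : 0 < σ2)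
    (hmeas : Measurable φ)
    (hnonneg : ∀ x ∈ Set.Ico (0:ℝ) 1, 0 ≤ φ x)
    (hprob : ∫ x in Set.Ico (0:ℝ) 1, φ x = 1)
    (hasymp : Filter.Tendsto (fun x => φ x / (cφ * (1 - x) ^ β)) (𝓝[<] (1:ℝ)) (𝓝 1)) :
    Tendsto (fun y : ℝ =>
        y ^ (1 - β) *
          (σ2 / (2 * Real.pi) *
            ∫ x in Set.Ico (0:ℝ) 1, φ x / ((1 - x) ^ 2 + 4 * x * Real.sin (y / 2) ^ 2)))
      (𝓝[>] (0:ℝ))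
      (𝓝 (σ2 * cφ / (2 * Real.pi) * ∫ w in Set.Ioi (0:ℝ), w ^ β / (w ^ 2 + 1))) :=
  aggregated_AR1_spectral_density_asymptotics_general φ cφ β σ2 hc hβ0 hβ1 hmeas hprob hasymp
end

section
/- Let φ be a probability density on [0,1) satisfying φ(x) ~ c_φ(1-x)^β as x→1⁻ with c_φ > 0 and 0 < β < 1, and let σ² > 0. Define γ(t) = σ² ∫₀¹ x^t/(1-x²) φ(x) dx for integers t ≥ 0. Then ∑_{t=0}^∞ γ(t) = ∞, i.e. the covariances of the limit aggregated Gaussian process are not summable (long memory). -/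
open MeasureTheory Filter Topology

open Set

/-! Near `x = 1` the density is squeezed between multiples of `(1 - x) ^ β`. Since `β > 0`,
`φ x / (1 - x ^ 2)` is then integrable, so every covariance is an honest integral of a
nonnegative function. Summing the geometric series under the integral (Tonelli) gives
`∑ γ(t) = σ² ∫ φ x / ((1 - x) (1 - x ^ 2)) dx`, and near `1` this integrand is bounded below by a
multiple of `(1 - x) ^ (β - 2)`, which is not integrable since `β < 1`. -/

lemma integrableOn_Ioo_one_sub_rpow_iff {a r : ℝ} (ha : a < 1) :
    IntegrableOn (fun x : ℝ => (1 - x) ^ r) (Ioo a 1) ↔ -1 < r := by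
  have hpre : (fun x : ℝ => 1 - x) ⁻¹' Ioo 0 (1 - a) = Ioo a 1 := by
    ext x; simp only [mem_preimage, mem_Ioo, sub_pos, sub_lt_sub_iff_left, and_comm]
  rw [← intervalIntegral.integrableOn_Ioo_rpow_iff (sub_pos.2 ha),
    ← (volume.measurePreserving_sub_left (1:ℝ)).integrableOn_comp_preimage
      (measurableEmbedding_subLeft 1) (f := fun x => x ^ r), hpre]
  rfl

lemma lintegral_Ioo_const_mul_one_sub_rpow_eq_top {a k r : ℝ} (ha : a < 1) (hk : 0 < k)
    (hr : r ≤ -1) : ∫⁻ x in Ioo a 1, ENNReal.ofReal (k * (1 - x) ^ r) = ⊤ := by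
  have hnonneg : ∀ x ∈ Ioo a 1, 0 ≤ (1 - x) ^ r := fun x hx =>
    Real.rpow_nonneg (sub_nonneg.2 hx.2.le) r
  have hdiv : ∫⁻ x in Ioo a 1, ENNReal.ofReal ((1 - x) ^ r) = ⊤ := by
    by_contra h
    refine hr.not_gt ((integrableOn_Ioo_one_sub_rpow_iff ha).1 ?_)
    refine (lintegral_ofReal_ne_top_iff_integrable ?_
      (ae_restrict_of_forall_mem measurableSet_Ioo hnonneg)).1 h
    exact (by fun_prop : Measurable fun x : ℝ => (1 - x) ^ r).aestronglyMeasurable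
  simp_rw [ENNReal.ofReal_mul hk.le]
  rw [lintegral_const_mul' _ _ ENNReal.ofReal_ne_top, hdiv,
    ENNReal.mul_top (ENNReal.ofReal_pos.2 hk).ne']

lemma ENNReal.tsum_ofReal_pow_mul {x a : ℝ} (hx0 : 0 ≤ x) (hx1 : x < 1) (ha : 0 ≤ a) :
    ∑' t : ℕ, ENNReal.ofReal (x ^ t * a) = ENNReal.ofReal (a / (1 - x)) := by
  rw [← ENNReal.ofReal_tsum_of_nonneg (fun t => by positivity)
    ((summable_geometric_of_lt_one hx0 hx1).mul_right a), tsum_mul_right,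
    tsum_geometric_of_lt_one hx0 hx1, inv_mul_eq_div]

lemma lintegral_tsum_ofReal_ne_top {α : Type*} [MeasurableSpace α] {μ : Measure α}
    {F : ℕ → α → ℝ} (hF : ∀ t, Integrable (F t) μ) (hF0 : ∀ t, 0 ≤ᵐ[μ] F t)
    (hsum : Summable fun t => ∫ x, F t x ∂μ) :
    ∫⁻ x, ∑' t, ENNReal.ofReal (F t x) ∂μ ≠ ⊤ := by
  rw [lintegral_tsum fun t => (hF t).aemeasurable.ennreal_ofReal]
  simp_rw [← ofReal_integral_eq_lintegral_ofReal (hF _) (hF0 _)]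
  rw [← ENNReal.ofReal_tsum_of_nonneg (fun t => integral_nonneg_of_ae (hF0 t)) hsum]
  exact ENNReal.ofReal_ne_top

lemma Filter.Tendsto.eventually_half_le_and_le_two_mul {α : Type*} {l : Filter α}
    {f g : α → ℝ} (hg : ∀ᶠ x in l, 0 < g x) (h : Tendsto (fun x => f x / g x) l (𝓝 1)) :
    ∀ᶠ x in l, g x / 2 ≤ f x ∧ f x ≤ 2 * g x := by
  filter_upwards [hg, h.eventually (Ioo_mem_nhds (by norm_num : (1:ℝ) / 2 < 1) one_lt_two)]
    with x hgx hx
  rw [lt_div_iff₀ hgx, div_lt_iff₀ hgx] at hx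
  constructor <;> linarith [hx.1, hx.2]

lemma exists_rpow_bounds_of_tendsto {φ : ℝ → ℝ} {C β : ℝ} (hC : 0 < C)
    (h : Tendsto (fun x => φ x / (C * (1 - x) ^ β)) (𝓝[<] 1) (𝓝 1)) :
    ∃ c ∈ Ico (0:ℝ) 1, ∀ x ∈ Ioo c 1,
      C / 2 * (1 - x) ^ β ≤ φ x ∧ φ x ≤ 2 * C * (1 - x) ^ β := by
  have hpos : ∀ᶠ x in 𝓝[<] (1:ℝ), 0 < C * (1 - x) ^ β :=
    eventually_nhdsWithin_of_forall fun x (hx : x < 1) =>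
      mul_pos hC (Real.rpow_pos_of_pos (sub_pos.2 hx) β)
  obtain ⟨c, hc, hsub⟩ := (mem_nhdsLT_iff_exists_mem_Ico_Ioo_subset zero_lt_one).1
    (h.eventually_half_le_and_le_two_mul hpos)
  refine ⟨c, hc, fun x hx => ?_⟩
  obtain ⟨hlow, hup⟩ := hsub hx
  constructor <;> linarith

lemma integrableOn_Ico_div_one_sub_sq_s5 {φ : ℝ → ℝ} {c C β : ℝ} (hβ : 0 < β) (hc : c ∈ Ico (0:ℝ) 1)
    (hmeas : Measurable φ) (hφ : IntegrableOn φ (Ico 0 1))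
    (hnonneg : ∀ x ∈ Ioo c 1, 0 ≤ φ x) (hbound : ∀ x ∈ Ioo c 1, φ x ≤ C * (1 - x) ^ β) :
    IntegrableOn (fun x => φ x / (1 - x ^ 2)) (Ico 0 1) := by
  rw [← Icc_union_Ioo_eq_Ico hc.1 hc.2]
  refine IntegrableOn.union ?_ ?_
  · have hcont : ContinuousOn (fun x : ℝ => (1 - x ^ 2)⁻¹) (Icc 0 c) :=
      ContinuousOn.inv₀ (by fun_prop) fun x hx => by nlinarith [hx.1, hx.2, hc.2]
    exact (hφ.mono_set (Icc_subset_Ico_right hc.2)).mul_continuousOn hcont isCompact_Icc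
  · have hmaj : IntegrableOn (fun x => C * (1 - x) ^ (β - 1)) (Ioo c 1) :=
      ((integrableOn_Ioo_one_sub_rpow_iff hc.2).2 (by linarith)).const_mul C
    refine hmaj.mono' (hmeas.div (by fun_prop)).aestronglyMeasurable
      (ae_restrict_of_forall_mem measurableSet_Ioo fun x hx => ?_)
    have hx1 : 0 < 1 - x := sub_pos.2 hx.2
    rw [Real.norm_of_nonneg (div_nonneg (hnonneg x hx) (by nlinarith [hc.1, hx.1])),
      Real.rpow_sub_one hx1.ne', mul_div_assoc']
    calc φ x / (1 - x ^ 2) ≤ φ x / (1 - x) := by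
          gcongr
          · exact hnonneg x hx
          · nlinarith [hc.1, hx.1]
      _ ≤ C * (1 - x) ^ β / (1 - x) := by gcongr; exact hbound x hx

lemma mul_one_sub_rpow_sub_two_le {x C β p : ℝ} (hC : 0 ≤ C) (hx : x ∈ Ico (0:ℝ) 1)
    (h : C / 2 * (1 - x) ^ β ≤ p) :
    C / 4 * (1 - x) ^ (β - 2) ≤ p / (1 - x ^ 2) / (1 - x) := by
  have hx1 : 0 < 1 - x := sub_pos.2 hx.2
  have hp : 0 ≤ p := le_trans (by positivity) h
  rw [Real.rpow_sub hx1, Real.rpow_two, div_div]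
  calc C / 4 * ((1 - x) ^ β / (1 - x) ^ 2)
      = C / 2 * (1 - x) ^ β / (2 * (1 - x) * (1 - x)) := by field_simp; ring
    _ ≤ p / ((1 - x ^ 2) * (1 - x)) := by
      gcongr
      · exact mul_pos (by nlinarith [hx.1]) hx1
      · nlinarith [hx.1]

/-- Long memory of the limit aggregated Gaussian process: if the mixing density
satisfies `φ(x) ~ c_φ (1-x)^β` as `x → 1⁻` with `0 < β < 1`, then the covariances
`γ(t) = σ² ∫₀¹ x^t/(1-x²) φ(x) dx` are not summable. -/
theorem aggregated_AR1_covariances_not_summable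
    (φ : ℝ → ℝ) (cφ β σ2 : ℝ) (hc : 0 < cφ) (hβ0 : 0 < β) (hβ1 : β < 1) (hσ : 0 < σ2)
    (hmeas : Measurable φ)
    (hnonneg : ∀ x ∈ Set.Ico (0:ℝ) 1, 0 ≤ φ x)
    (hprob : ∫ x in Set.Ico (0:ℝ) 1, φ x = 1)
    (hasymp : Tendsto (fun x => φ x / (cφ * (1 - x) ^ β)) (𝓝[<] (1:ℝ)) (𝓝 1)) :
    ¬ Summable (fun t : ℕ => σ2 * ∫ x in Set.Ico (0:ℝ) 1, x ^ t / (1 - x ^ 2) * φ x) := by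
  intro hsum
  simp only [div_mul_eq_mul_div, mul_div_assoc] at hsum
  have hφ : IntegrableOn φ (Ico 0 1) :=
    Integrable.of_integral_ne_zero (by rw [hprob]; exact one_ne_zero)
  obtain ⟨c, hc01, hbound⟩ := exists_rpow_bounds_of_tendsto hc hasymp
  have hsub : Ioo c 1 ⊆ Ico 0 1 := fun x hx => ⟨hc01.1.trans hx.1.le, hx.2⟩
  have henv := integrableOn_Ico_div_one_sub_sq_s5 hβ0 hc01 hmeas hφ
    (fun x hx => hnonneg x (hsub hx)) (fun x hx => (hbound x hx).2)
  have henv0 : ∀ x ∈ Ico (0:ℝ) 1, 0 ≤ φ x / (1 - x ^ 2) := fun x hx =>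
    div_nonneg (hnonneg x hx) (by nlinarith [hx.1, hx.2])
  have hF (t : ℕ) : IntegrableOn (fun x => x ^ t * (φ x / (1 - x ^ 2))) (Ico 0 1) :=
    henv.bdd_mul (c := 1) (by fun_prop) (ae_restrict_of_forall_mem measurableSet_Ico fun x hx => by
      rw [norm_pow, Real.norm_of_nonneg hx.1]
      exact pow_le_one₀ hx.1 hx.2.le)
  have hfin := lintegral_tsum_ofReal_ne_top hF
    (fun t => ae_restrict_of_forall_mem measurableSet_Ico fun x hx =>
      mul_nonneg (pow_nonneg hx.1 t) (henv0 x hx))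
    ((summable_mul_left_iff hσ.ne').1 hsum)
  refine hfin (eq_top_mono ?_ (lintegral_Ioo_const_mul_one_sub_rpow_eq_top hc01.2
    (by positivity : 0 < cφ / 4) (by linarith : β - 2 ≤ -1)))
  calc ∫⁻ x in Ioo c 1, ENNReal.ofReal (cφ / 4 * (1 - x) ^ (β - 2))
      ≤ ∫⁻ x in Ioo c 1, ∑' t : ℕ, ENNReal.ofReal (x ^ t * (φ x / (1 - x ^ 2))) :=
        setLIntegral_mono' measurableSet_Ioo fun x hx => by
          rw [ENNReal.tsum_ofReal_pow_mul (hsub hx).1 hx.2 (henv0 x (hsub hx))]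
          exact ENNReal.ofReal_le_ofReal
            (mul_one_sub_rpow_sub_two_le hc.le (hsub hx) (hbound x hx).1)
    _ ≤ _ := lintegral_mono_set hsub
end

section
/- Let φ be a probability density on [0,1) satisfying φ(x) ~ c_φ(1-x)^β as x→1⁻ with c_φ > 0 and β > -1. Then, as the integer j → ∞, ∫₀¹ x^j φ(x) dx ~ c_φ Γ(1+β) j^{-(1+β)}, i.e. j^{1+β} ∫₀¹ x^j φ(x) dx → c_φ Γ(1+β). -/
open MeasureTheory Filter Topology

lemma beta_eval (β : ℝ) (hβ : -1 < β) (n : ℕ) :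
    ∫ x in (0:ℝ)..1, x ^ n * (1 - x) ^ β
      = (n.factorial : ℝ) / ∏ j ∈ Finset.range (n + 1), (β + 1 + j) := by
  have h1 : (∫ x in (0:ℝ)..1, x ^ n * (1 - x) ^ β)
      = ∫ x in (0:ℝ)..1, x ^ β * (1 - x) ^ n := by
    have := intervalIntegral.integral_comp_sub_left
      (fun y : ℝ => y ^ β * (1 - y) ^ n) 1 (a := 0) (b := 1)
    simp only [sub_zero, sub_self] at this
    rw [← this]
    congr 1
    ext x
    ring_nf
  have hre : 0 < Complex.re (β + 1) := by simp; linarith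
  have h2 : Complex.betaIntegral (β + 1) (n + 1)
      = ((∫ x in (0:ℝ)..1, x ^ β * (1 - x) ^ n : ℝ) : ℂ) := by
    rw [Complex.betaIntegral, ← intervalIntegral.integral_ofReal]
    refine intervalIntegral.integral_congr fun x hx => ?_
    rw [Set.uIcc_of_le (by norm_num : (0:ℝ) ≤ 1)] at hx
    have hx0 : 0 ≤ x := hx.1
    have hx1 : x ≤ 1 := hx.2
    have e1 : (β + 1 - 1 : ℂ) = ((β : ℝ) : ℂ) := by push_cast; ring
    have e2 : ((n : ℂ) + 1 - 1) = ((n : ℕ) : ℂ) := by push_cast; ring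
    rw [e1, e2, Complex.cpow_natCast, ← Complex.ofReal_cpow hx0]
    push_cast
    ring
  have h3 := Complex.betaIntegral_eval_nat_add_one_right hre n
  rw [h3] at h2
  have h4 : ((n.factorial : ℂ) / ∏ j ∈ Finset.range (n + 1), ((β:ℂ) + 1 + j))
      = (((n.factorial : ℝ) / ∏ j ∈ Finset.range (n + 1), (β + 1 + j) : ℝ) : ℂ) := by
    push_cast
    ring
  rw [h4] at h2
  have := Complex.ofReal_inj.mp h2.symm
  rw [h1, this]

lemma beta_tendsto (β : ℝ) (hβ : -1 < β) :
    Tendsto (fun n : ℕ => (n : ℝ) ^ ((1:ℝ) + β) * ∫ x in Set.Ico (0:ℝ) 1, x ^ n * (1 - x) ^ β)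
      atTop (𝓝 (Real.Gamma (1 + β))) := by
  have key : (fun n : ℕ => (n : ℝ) ^ ((1:ℝ) + β) * ∫ x in Set.Ico (0:ℝ) 1, x ^ n * (1 - x) ^ β)
      = Real.GammaSeq (1 + β) := by
    funext n
    have hIco : (∫ x in Set.Ico (0:ℝ) 1, x ^ n * (1 - x) ^ β)
        = ∫ x in (0:ℝ)..1, x ^ n * (1 - x) ^ β := by
      rw [intervalIntegral.integral_of_le (by norm_num : (0:ℝ) ≤ 1),
        MeasureTheory.integral_Ico_eq_integral_Ioo, MeasureTheory.integral_Ioc_eq_integral_Ioo]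
    rw [hIco, beta_eval β hβ n, Real.GammaSeq]
    rw [← mul_div_assoc]
    congr 2
    funext j
    ring
  rw [key]
  exact Real.GammaSeq_tendsto_Gamma (1 + β)

lemma geo_decay (s r : ℝ) (hr0 : 0 < r) (hr1 : r < 1) :
    Tendsto (fun n : ℕ => (n : ℝ) ^ s * r ^ n) atTop (𝓝 0) := by
  have hb : 0 < -Real.log r := by
    have := Real.log_neg hr0 hr1
    linarith
  have h := (tendsto_rpow_mul_exp_neg_mul_atTop_nhds_zero s (-Real.log r) hb).comp
    tendsto_natCast_atTop_atTop (α := ℕ)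
  convert h using 2 with n
  simp only [Function.comp_apply]
  congr 1
  rw [neg_neg, mul_comm, Real.exp_nat_mul, Real.exp_log hr0]

/-- Moment asymptotics of the mixing density: if `φ(x) ~ c_φ (1-x)^β` as `x → 1⁻`
with `β > -1`, then `∫₀¹ x^j φ(x) dx ~ c_φ Γ(1+β) j^{-(1+β)}` as the integer `j → ∞`. -/
theorem mixing_density_moment_asymptotics
    (φ : ℝ → ℝ) (cφ β : ℝ) (hc : 0 < cφ) (hβ : -1 < β)
    (hmeas : Measurable φ)
    (hnonneg : ∀ x ∈ Set.Ico (0:ℝ) 1, 0 ≤ φ x)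
    (hprob : ∫ x in Set.Ico (0:ℝ) 1, φ x = 1)
    (hasymp : Tendsto (fun x => φ x / (cφ * (1 - x) ^ β)) (𝓝[<] (1:ℝ)) (𝓝 1)) :
    Tendsto (fun j : ℕ =>
        (j : ℝ) ^ ((1:ℝ) + β) * ∫ x in Set.Ico (0:ℝ) 1, x ^ j * φ x)
      atTop (𝓝 (cφ * Real.Gamma (1 + β))) := by
  have hΓpos : 0 < Real.Gamma (1 + β) := Real.Gamma_pos_of_pos (by linarith)
  set Γβ : ℝ := Real.Gamma (1 + β) with hΓβ
  -- integrability of φ on [0,1)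
  have intφ : IntegrableOn φ (Set.Ico (0:ℝ) 1) := by
    by_contra h
    rw [MeasureTheory.integral_undef h] at hprob
    norm_num at hprob
  -- integrability of (1-x)^β on [0,1)
  have intB : IntegrableOn (fun x : ℝ => (1 - x) ^ β) (Set.Ico (0:ℝ) 1) := by
    have h0 : IntervalIntegrable (fun x : ℝ => x ^ β) volume 0 1 :=
      intervalIntegral.intervalIntegrable_rpow' hβ
    have h1 := h0.comp_sub_left 1
    simp only [sub_zero, sub_self] at h1
    have h2 : IntegrableOn (fun x : ℝ => (1 - x) ^ β) (Set.Ioc (0:ℝ) 1) := by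
      have := (intervalIntegrable_iff_integrableOn_Ioc_of_le (by norm_num : (0:ℝ) ≤ 1)).mp h1.symm
      exact this
    rw [integrableOn_Ico_iff_integrableOn_Ioo]
    exact h2.mono_set Set.Ioo_subset_Ioc_self
  set A : ℝ := ∫ x in Set.Ico (0:ℝ) 1, (1 - x) ^ β with hA
  have hA0 : 0 ≤ A :=
    setIntegral_nonneg measurableSet_Ico fun x hx => Real.rpow_nonneg (by linarith [hx.2]) β
  set B : ℕ → ℝ := fun j => ∫ x in Set.Ico (0:ℝ) 1, x ^ j * (1 - x) ^ β with hB
  have hBlim : Tendsto (fun j : ℕ => (j:ℝ) ^ ((1:ℝ)+β) * B j) atTop (𝓝 Γβ) := beta_tendsto β hβ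
  have hB0 : ∀ j, 0 ≤ B j := fun j =>
    setIntegral_nonneg measurableSet_Ico fun x hx =>
      mul_nonneg (pow_nonneg hx.1 j) (Real.rpow_nonneg (by linarith [hx.2]) β)
  have intg : ∀ j : ℕ, IntegrableOn (fun x => x ^ j * φ x) (Set.Ico (0:ℝ) 1) := by
    intro j
    refine Integrable.mono intφ ((measurable_id.pow_const j).mul hmeas).aestronglyMeasurable ?_
    filter_upwards [ae_restrict_mem measurableSet_Ico] with x hx
    rw [Real.norm_eq_abs, Real.norm_eq_abs, abs_mul]
    have : |x ^ j| ≤ 1 := by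
      rw [abs_pow]
      exact pow_le_one₀ (abs_nonneg x) (by rw [abs_of_nonneg hx.1]; exact hx.2.le)
    calc |x ^ j| * |φ x| ≤ 1 * |φ x| := by
          exact mul_le_mul_of_nonneg_right this (abs_nonneg _)
      _ = |φ x| := one_mul _
  have inth : ∀ j : ℕ, IntegrableOn (fun x => x ^ j * (1 - x) ^ β) (Set.Ico (0:ℝ) 1) := by
    intro j
    refine Integrable.mono intB
      ((measurable_id.pow_const j).mul (by fun_prop)).aestronglyMeasurable ?_
    filter_upwards [ae_restrict_mem measurableSet_Ico] with x hx
    rw [Real.norm_eq_abs, Real.norm_eq_abs, abs_mul]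
    have : |x ^ j| ≤ 1 := by
      rw [abs_pow]
      exact pow_le_one₀ (abs_nonneg x) (by rw [abs_of_nonneg hx.1]; exact hx.2.le)
    calc |x ^ j| * |(1-x) ^ β| ≤ 1 * |(1-x) ^ β| :=
          mul_le_mul_of_nonneg_right this (abs_nonneg _)
      _ = |(1-x) ^ β| := one_mul _
  rw [Metric.tendsto_atTop]
  intro ε hε
  have hcΓ : 0 < cφ * Γβ + 1 := by positivity
  set ε' : ℝ := ε / (4 * (cφ * Γβ + 1)) with hε'def
  have hε' : 0 < ε' := by positivity
  obtain ⟨δ, hδ0, hδ⟩ := (Metric.tendsto_nhdsWithin_nhds.mp hasymp) ε' hε'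
  set d : ℝ := min (δ/2) 2⁻¹ with hd
  have hd0 : 0 < d := lt_min (by linarith) (by norm_num)
  have hdδ : d < δ := lt_of_le_of_lt (min_le_left _ _) (by linarith)
  have hdhalf : d ≤ 2⁻¹ := min_le_right _ _
  set r : ℝ := 1 - d with hrdef
  have hr0 : 0 < r := by rw [hrdef]; norm_num at hdhalf ⊢; linarith
  have hr1 : r < 1 := by rw [hrdef]; linarith
  -- pointwise bound near 1
  have hpt : ∀ x ∈ Set.Ico r 1, |φ x - cφ * (1-x) ^ β| ≤ ε' * (cφ * (1-x) ^ β) := by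
    intro x hx
    have hx1 : x < 1 := hx.2
    have h1x : 0 < 1 - x := by linarith
    have hpos : 0 < cφ * (1-x) ^ β := mul_pos hc (Real.rpow_pos_of_pos h1x β)
    have hdist : dist x 1 < δ := by
      rw [Real.dist_eq, abs_of_nonpos (by linarith)]
      have : r ≤ x := hx.1
      rw [hrdef] at this
      linarith
    have hb := hδ (Set.mem_Iio.mpr hx1) hdist
    rw [Real.dist_eq] at hb
    have heq2 : φ x - cφ * (1-x) ^ β = (φ x / (cφ * (1-x) ^ β) - 1) * (cφ * (1-x) ^ β) := by
      field_simp
    rw [heq2, abs_mul, abs_of_pos hpos]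
    exact mul_le_mul_of_nonneg_right hb.le hpos.le
  -- main estimate for each j
  have main : ∀ j : ℕ, |(∫ x in Set.Ico (0:ℝ) 1, x ^ j * φ x) - cφ * B j|
      ≤ r ^ j * (1 + cφ * A) + ε' * (cφ * B j) := by
    intro j
    set F : ℝ → ℝ := fun x => x ^ j * φ x - cφ * (x ^ j * (1 - x) ^ β) with hF
    have intF : IntegrableOn F (Set.Ico (0:ℝ) 1) := (intg j).sub ((inth j).const_mul cφ)
    have intFabs : IntegrableOn (fun x => |F x|) (Set.Ico (0:ℝ) 1) := intF.abs
    have intsum : IntegrableOn (fun x => φ x + cφ * (1 - x) ^ β) (Set.Ico (0:ℝ) 1) :=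
      intφ.add (intB.const_mul cφ)
    have intsum' : IntegrableOn (fun x => r ^ j * (φ x + cφ * (1 - x) ^ β)) (Set.Ico (0:ℝ) 1) :=
      intsum.const_mul _
    have inth' : IntegrableOn (fun x => ε' * cφ * (x ^ j * (1 - x) ^ β)) (Set.Ico (0:ℝ) 1) :=
      (inth j).const_mul _
    have hsub : (∫ x in Set.Ico (0:ℝ) 1, x ^ j * φ x) - cφ * B j
        = ∫ x in Set.Ico (0:ℝ) 1, F x := by
      rw [hF, hB]
      rw [MeasureTheory.integral_sub (intg j) ((inth j).const_mul cφ),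
        integral_const_mul]
    rw [hsub]
    have habs : |∫ x in Set.Ico (0:ℝ) 1, F x| ≤ ∫ x in Set.Ico (0:ℝ) 1, |F x| := by
      simpa using
        MeasureTheory.norm_integral_le_integral_norm (μ := volume.restrict (Set.Ico (0:ℝ) 1)) F
    refine le_trans habs ?_
    have hunion : Set.Ico (0:ℝ) 1 = Set.Ico (0:ℝ) r ∪ Set.Ico r 1 :=
      (Set.Ico_union_Ico_eq_Ico (by linarith) hr1.le).symm
    have hsplit : ∫ x in Set.Ico (0:ℝ) 1, |F x|
        = (∫ x in Set.Ico (0:ℝ) r, |F x|) + ∫ x in Set.Ico r 1, |F x| := by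
      rw [hunion]
      exact MeasureTheory.setIntegral_union (Set.Ico_disjoint_Ico_same)
        measurableSet_Ico
        (intFabs.mono_set (Set.Ico_subset_Ico_right hr1.le))
        (intFabs.mono_set (Set.Ico_subset_Ico_left hr0.le))
    rw [hsplit]
    have p1 : ∫ x in Set.Ico (0:ℝ) r, |F x| ≤ r ^ j * (1 + cφ * A) := by
      have step1 : ∫ x in Set.Ico (0:ℝ) r, |F x|
          ≤ ∫ x in Set.Ico (0:ℝ) r, r ^ j * (φ x + cφ * (1 - x) ^ β) := by
        refine setIntegral_mono_on (intFabs.mono_set (Set.Ico_subset_Ico_right hr1.le))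
          (intsum'.mono_set (Set.Ico_subset_Ico_right hr1.le)) measurableSet_Ico ?_
        intro x hx
        have hx0 : 0 ≤ x := hx.1
        have hxr : x ≤ r := hx.2.le
        have hx1 : x < 1 := lt_of_lt_of_le hx.2 hr1.le
        have h1x : 0 ≤ 1 - x := by linarith
        have hφx : 0 ≤ φ x := hnonneg x ⟨hx0, hx1⟩
        have hrp : 0 ≤ (1-x) ^ β := Real.rpow_nonneg h1x β
        have hxj : x ^ j ≤ r ^ j := pow_le_pow_left₀ hx0 hxr j
        have hxj0 : 0 ≤ x ^ j := pow_nonneg hx0 j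
        calc |F x| ≤ |x ^ j * φ x| + |cφ * (x ^ j * (1-x) ^ β)| := abs_sub _ _
          _ = x ^ j * φ x + cφ * (x ^ j * (1-x) ^ β) := by
              rw [abs_of_nonneg (mul_nonneg hxj0 hφx), abs_of_nonneg (by positivity)]
          _ ≤ r ^ j * φ x + cφ * (r ^ j * (1-x) ^ β) := by gcongr
          _ = r ^ j * (φ x + cφ * (1-x) ^ β) := by ring
      have step2 : ∫ x in Set.Ico (0:ℝ) r, r ^ j * (φ x + cφ * (1 - x) ^ β)
          ≤ r ^ j * (1 + cφ * A) := by
        rw [integral_const_mul]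
        refine mul_le_mul_of_nonneg_left ?_ (pow_nonneg hr0.le j)
        have hmono : ∫ x in Set.Ico (0:ℝ) r, (φ x + cφ * (1 - x) ^ β)
            ≤ ∫ x in Set.Ico (0:ℝ) 1, (φ x + cφ * (1 - x) ^ β) := by
          refine setIntegral_mono_set intsum ?_
            (HasSubset.Subset.eventuallyLE (Set.Ico_subset_Ico_right hr1.le))
          filter_upwards [ae_restrict_mem measurableSet_Ico] with x hx
          have hφx : 0 ≤ φ x := hnonneg x hx
          have hrp : 0 ≤ (1-x) ^ β := Real.rpow_nonneg (by linarith [hx.2]) β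
          positivity
        have hval : ∫ x in Set.Ico (0:ℝ) 1, (φ x + cφ * (1 - x) ^ β) = 1 + cφ * A := by
          rw [MeasureTheory.integral_add intφ (intB.const_mul cφ),
            integral_const_mul, hprob, hA]
        linarith
      exact le_trans step1 step2
    have p2 : ∫ x in Set.Ico r 1, |F x| ≤ ε' * (cφ * B j) := by
      have step1 : ∫ x in Set.Ico r 1, |F x|
          ≤ ∫ x in Set.Ico r 1, ε' * cφ * (x ^ j * (1 - x) ^ β) := by
        refine setIntegral_mono_on (intFabs.mono_set (Set.Ico_subset_Ico_left hr0.le))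
          (inth'.mono_set (Set.Ico_subset_Ico_left hr0.le))
          measurableSet_Ico ?_
        intro x hx
        have hx0 : 0 ≤ x := le_trans hr0.le hx.1
        have hxj0 : 0 ≤ (x:ℝ) ^ j := pow_nonneg hx0 j
        have hbd := hpt x hx
        have hFx : |F x| = x ^ j * |φ x - cφ * (1-x) ^ β| := by
          rw [hF]
          rw [← abs_of_nonneg hxj0, ← abs_mul]
          congr 1
          ring
        rw [hFx]
        calc x ^ j * |φ x - cφ * (1-x) ^ β| ≤ x ^ j * (ε' * (cφ * (1-x) ^ β)) :=
              mul_le_mul_of_nonneg_left hbd hxj0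
          _ = ε' * cφ * (x ^ j * (1-x) ^ β) := by ring
      have step2 : ∫ x in Set.Ico r 1, ε' * cφ * (x ^ j * (1 - x) ^ β) ≤ ε' * (cφ * B j) := by
        rw [integral_const_mul]
        have hmono : ∫ x in Set.Ico r 1, x ^ j * (1 - x) ^ β ≤ B j := by
          rw [hB]
          refine setIntegral_mono_set (inth j) ?_
            (HasSubset.Subset.eventuallyLE (Set.Ico_subset_Ico_left hr0.le))
          filter_upwards [ae_restrict_mem measurableSet_Ico] with x hx
          exact mul_nonneg (pow_nonneg hx.1 j) (Real.rpow_nonneg (by linarith [hx.2]) β)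
        calc ε' * cφ * ∫ x in Set.Ico r 1, x ^ j * (1-x) ^ β ≤ ε' * cφ * B j :=
              mul_le_mul_of_nonneg_left hmono (by positivity)
          _ = ε' * (cφ * B j) := by ring
      exact le_trans step1 step2
    linarith
  -- eventual bounds
  have e1 : ∀ᶠ j : ℕ in atTop, (j:ℝ) ^ ((1:ℝ)+β) * r ^ j * (1 + cφ * A) < ε/4 := by
    have h := (geo_decay ((1:ℝ)+β) r hr0 hr1).const_mul (1 + cφ * A)
    rw [mul_zero] at h
    have := h.eventually (eventually_lt_nhds (show (0:ℝ) < ε/4 by linarith))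
    filter_upwards [this] with j hj
    calc (j:ℝ) ^ ((1:ℝ)+β) * r ^ j * (1 + cφ * A)
        = (1 + cφ * A) * ((j:ℝ) ^ ((1:ℝ)+β) * r ^ j) := by ring
      _ < ε/4 := hj
  have e2 : ∀ᶠ j : ℕ in atTop,
      |cφ * ((j:ℝ) ^ ((1:ℝ)+β) * B j) - cφ * Γβ| < ε/4
        ∧ cφ * ((j:ℝ) ^ ((1:ℝ)+β) * B j) ≤ cφ * Γβ + 1 := by
    have h := hBlim.const_mul cφ
    have h1 := h.eventually (Metric.ball_mem_nhds (cφ * Γβ) (show (0:ℝ) < min (ε/4) 1 by positivity))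
    filter_upwards [h1] with j hj
    have hj' : |cφ * ((j:ℝ) ^ ((1:ℝ)+β) * B j) - cφ * Γβ| < min (ε/4) 1 := by
      simpa [Real.dist_eq] using hj
    constructor
    · exact lt_of_lt_of_le hj' (min_le_left _ _)
    · have := abs_lt.mp (lt_of_lt_of_le hj' (min_le_right _ _))
      linarith [this.2]
  obtain ⟨N, hN⟩ := eventually_atTop.mp (e1.and e2)
  refine ⟨N, fun n hn => ?_⟩
  obtain ⟨h1, h2, h3⟩ := hN n hn
  rw [Real.dist_eq]
  set a : ℝ := (n:ℝ) ^ ((1:ℝ)+β) with ha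
  have ha0 : 0 ≤ a := Real.rpow_nonneg (Nat.cast_nonneg n) _
  set In : ℝ := ∫ x in Set.Ico (0:ℝ) 1, x ^ n * φ x with hIn
  have hm := main n
  have t4 : |a * In - cφ * Γβ| ≤ a * |In - cφ * B n| + |cφ * (a * B n) - cφ * Γβ| := by
    have hsplit : a * In - cφ * Γβ = a * (In - cφ * B n) + (cφ * (a * B n) - cφ * Γβ) := by ring
    rw [hsplit]
    refine le_trans (abs_add_le _ _) ?_
    rw [abs_mul, abs_of_nonneg ha0]
  have t1 : a * |In - cφ * B n| ≤ a * r ^ n * (1 + cφ * A) + ε' * (cφ * (a * B n)) := by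
    calc a * |In - cφ * B n| ≤ a * (r ^ n * (1 + cφ * A) + ε' * (cφ * B n)) :=
          mul_le_mul_of_nonneg_left hm ha0
      _ = a * r ^ n * (1 + cφ * A) + ε' * (cφ * (a * B n)) := by ring
  have t2 : ε' * (cφ * (a * B n)) ≤ ε' * (cφ * Γβ + 1) := mul_le_mul_of_nonneg_left h3 hε'.le
  have t3 : ε' * (cφ * Γβ + 1) = ε / 4 := by
    rw [hε'def]
    field_simp
  have h1' : a * r ^ n * (1 + cφ * A) < ε / 4 := h1
  linarith [t4, t1, t2, t3, h1', h2]
end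

section
/- For every d with 0 < d < 1/2 there exists a constant C(d) > 0 such that, for all y ∈ (0,π), ∫₀¹ C(d) x^{d-1}(1-x)^{1-2d}(1+x) / |1 - x e^{iy}|² dx = (2 sin(y/2))^{-2d}. In other words, the FARIMA(0,d,0) spectral density f(y) = (2π)^{-1} |2 sin(y/2)|^{-2d} is the mixture over x ∈ [0,1) of AR(1) spectral densities (2π)^{-1}|1 - x e^{iy}|^{-2} with mixing density φ(x) = C(d) x^{d-1}(1-x)^{1-2d}(1+x). -/
/-!
With `t = (2 sin (y/2))²` one has `|1 - x e^{iy}|² = (1 - x)² + x t`. The substitution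
`w = (1 - x)² / (x t)` is a decreasing bijection of `(0, 1)` onto `(0, ∞)` with
`|dw/dx| = (1 - x)(1 + x) / (x² t)` and `1 + w = |1 - x e^{iy}|² / (x t)`; it turns the
integral into `C t^{-d} ∫₀^∞ w^{-d} / (1 + w) dw`. Choosing `C` as the reciprocal of this
finite positive integral gives `t^{-d} = (2 sin (y/2))^{-2d}`.
-/

open MeasureTheory Complex Set

lemma norm_one_sub_mul_exp_mul_I_sq (x y : ℝ) :
    ‖1 - (x : ℂ) * Complex.exp (Complex.I * y)‖ ^ 2 =
      (1 - x) ^ 2 + x * (2 * Real.sin (y / 2)) ^ 2 := by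
  have h := Real.sin_sq_eq_half_sub (y / 2)
  rw [show 2 * (y / 2) = y by ring] at h
  rw [Complex.sq_norm, mul_comm Complex.I, Complex.exp_mul_I, Complex.normSq_apply]
  simp only [← Complex.ofReal_cos, ← Complex.ofReal_sin, sub_re, one_re, mul_re, ofReal_re,
    ofReal_im, add_re, add_im, mul_im, I_re, I_im, sub_im, one_im]
  linear_combination x ^ 2 * Real.sin_sq_add_cos_sq y - 4 * x * h

noncomputable def farimaSubst (t x : ℝ) : ℝ := (1 - x) ^ 2 / (x * t)

lemma hasDerivAt_farimaSubst {t x : ℝ} (ht : t ≠ 0) (hx : x ≠ 0) :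
    HasDerivAt (farimaSubst t) (-((1 - x) * (1 + x)) / (x ^ 2 * t)) x := by
  refine ((((hasDerivAt_id' x).const_sub 1).fun_pow 2).fun_div ((hasDerivAt_id' x).mul_const t)
    (mul_ne_zero hx ht)).congr_deriv ?_
  field_simp
  ring

lemma strictAntiOn_farimaSubst {t : ℝ} (ht : 0 < t) : StrictAntiOn (farimaSubst t) (Ioo 0 1) := by
  refine strictAntiOn_of_deriv_neg (convex_Ioo 0 1)
    (fun x hx => (hasDerivAt_farimaSubst ht.ne' hx.1.ne').continuousAt.continuousWithinAt)
    fun x hx => ?_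
  rw [interior_Ioo] at hx
  rw [(hasDerivAt_farimaSubst ht.ne' hx.1.ne').deriv]
  exact div_neg_of_neg_of_pos (by nlinarith [hx.1, hx.2]) (by have := hx.1; positivity)

lemma image_farimaSubst {t : ℝ} (ht : 0 < t) : farimaSubst t '' Ioo 0 1 = Ioi 0 := by
  refine (image_subset_iff.2 fun x hx => ?_).antisymm fun w (hw : 0 < w) => ?_
  · have : 0 < 1 - x := sub_pos.2 hx.2
    exact div_pos (by positivity) (mul_pos hx.1 ht)
  · -- a zero of `(1 - x)² - w t x`, which is `1` at `0` and `-w t` at `1`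
    obtain ⟨x, hx, hx0⟩ : (0 : ℝ) ∈ (fun x => (1 - x) ^ 2 - w * t * x) '' Ioo 0 1 :=
      intermediate_value_Ioo' zero_le_one (by fun_prop) ⟨by simp; positivity, by norm_num⟩
    refine ⟨x, hx, ?_⟩
    rw [farimaSubst, div_eq_iff (mul_pos hx.1 ht).ne']
    linarith

lemma integral_Ioi_eq_integral_farimaSubst {t : ℝ} (ht : 0 < t) (g : ℝ → ℝ) :
    ∫ w in Ioi 0, g w =
      ∫ x in Ioo 0 1, (1 - x) * (1 + x) / (x ^ 2 * t) * g (farimaSubst t x) := by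
  rw [← image_farimaSubst ht, integral_image_eq_integral_abs_deriv_smul measurableSet_Ioo
    (fun x hx => (hasDerivAt_farimaSubst ht.ne' hx.1.ne').hasDerivWithinAt)
    (strictAntiOn_farimaSubst ht).injOn]
  refine setIntegral_congr_fun measurableSet_Ioo fun x hx => ?_
  have : 0 < 1 - x := sub_pos.2 hx.2
  rw [smul_eq_mul, neg_div, abs_neg, abs_of_pos (by have := hx.1; positivity)]

/-- Its integral over `(0, ∞)` is `B(1 - d, d) = π / sin (π d)`, so the constant of the theorem
is `sin (π d) / π`. -/
noncomputable def betaKernel (d w : ℝ) : ℝ := w ^ (-d) / (1 + w)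

lemma integrableOn_betaKernel {d : ℝ} (hd0 : 0 < d) (hd1 : d < 1) :
    IntegrableOn (betaKernel d) (Ioi 0) := by
  have hmeas : Measurable (betaKernel d) := by unfold betaKernel; fun_prop
  rw [← Ioc_union_Ioi_eq_Ioi zero_le_one]
  refine IntegrableOn.union ?_ ?_
  · refine ((intervalIntegrable_iff_integrableOn_Ioc_of_le zero_le_one).1
      (intervalIntegral.intervalIntegrable_rpow' (by linarith : -1 < -d))).mono'
      hmeas.aestronglyMeasurable ?_
    filter_upwards [ae_restrict_mem measurableSet_Ioc] with w hw
    have hw0 : 0 < w := hw.1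
    rw [Real.norm_of_nonneg (by unfold betaKernel; positivity)]
    exact div_le_self (by positivity) (by linarith)
  · refine (integrableOn_Ioi_rpow_of_lt (by linarith : -d - 1 < -1) one_pos).mono'
      hmeas.aestronglyMeasurable ?_
    filter_upwards [ae_restrict_mem measurableSet_Ioi] with w (hw : 1 < w)
    have hw0 : 0 < w := one_pos.trans hw
    rw [Real.norm_of_nonneg (by unfold betaKernel; positivity), Real.rpow_sub_one hw0.ne']
    exact div_le_div_of_nonneg_left (by positivity) hw0 (by linarith)

lemma integral_betaKernel_pos {d : ℝ} (hd0 : 0 < d) (hd1 : d < 1) :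
    0 < ∫ w in Ioi 0, betaKernel d w := by
  have hpos : ∀ w ∈ Ioi (0 : ℝ), 0 < betaKernel d w := fun w (hw : 0 < w) => by
    unfold betaKernel; positivity
  rw [setIntegral_pos_iff_support_of_nonneg_ae
    ((ae_restrict_mem measurableSet_Ioi).mono fun w hw => (hpos w hw).le)
    (integrableOn_betaKernel hd0 hd1)]
  refine lt_of_lt_of_le ?_ (measure_mono fun w hw => ⟨(hpos w hw).ne', hw⟩)
  simp

lemma mixing_integrand_eq {d t x : ℝ} (ht : 0 < t) (hx : x ∈ Ioo 0 1) :
    x ^ (d - 1) * (1 - x) ^ (1 - 2 * d) * (1 + x) / ((1 - x) ^ 2 + x * t) =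
      t ^ (-d) * ((1 - x) * (1 + x) / (x ^ 2 * t) * betaKernel d (farimaSubst t x)) := by
  obtain ⟨hx0, hx1⟩ := hx
  have hx1' : 0 < 1 - x := sub_pos.2 hx1
  have hsubst : farimaSubst t x ^ (-d) = (1 - x) ^ (-(2 * d)) * (x ^ d * t ^ d) := by
    rw [farimaSubst, Real.div_rpow (by positivity) (by positivity), ← Real.rpow_natCast,
      ← Real.rpow_mul hx1'.le, Real.rpow_neg (by positivity), div_inv_eq_mul,
      Real.mul_rpow hx0.le ht.le]
    push_cast
    ring_nf
  rw [betaKernel, hsubst, farimaSubst, Real.rpow_sub_one hx0.ne', Real.rpow_neg ht.le,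
    show 1 - 2 * d = 1 + -(2 * d) by ring, Real.rpow_add hx1', Real.rpow_one]
  have : 0 < x ^ d := Real.rpow_pos_of_pos hx0 d
  have : 0 < t ^ d := Real.rpow_pos_of_pos ht d
  field_simp
  ring

/-- The FARIMA(0,d,0) spectral density as a mixture of AR(1) spectral densities:
for `0 < d < 1/2` there is `C(d) > 0` such that for all `y ∈ (0,π)`,
`∫₀¹ C(d) x^{d-1} (1-x)^{1-2d} (1+x) / |1 - x e^{iy}|² dx = (2 sin(y/2))^{-2d}`. -/
theorem FARIMA_is_mixture_of_AR1 (d : ℝ) (hd0 : 0 < d) (hd1 : d < 1/2) :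
    ∃ C : ℝ, 0 < C ∧ ∀ y ∈ Set.Ioo (0:ℝ) Real.pi,
      ∫ x in Set.Ioo (0:ℝ) 1,
          C * x ^ (d - 1) * (1 - x) ^ (1 - 2 * d) * (1 + x) /
            ‖1 - (x : ℂ) * Complex.exp (Complex.I * (y : ℂ))‖ ^ 2 =
        (2 * Real.sin (y / 2)) ^ (-(2 * d)) := by
  set J := ∫ w in Ioi 0, betaKernel d w
  have hJ : 0 < J := integral_betaKernel_pos hd0 (by linarith)
  refine ⟨J⁻¹, inv_pos.2 hJ, fun y ⟨hy0, hyπ⟩ => ?_⟩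
  have hs : 0 < 2 * Real.sin (y / 2) :=
    mul_pos two_pos (Real.sin_pos_of_pos_of_lt_pi (by linarith) (by linarith))
  obtain ⟨t, ht_eq⟩ : ∃ t, (2 * Real.sin (y / 2)) ^ 2 = t := ⟨_, rfl⟩
  have ht : 0 < t := ht_eq ▸ by positivity
  have htd : t ^ (-d) = (2 * Real.sin (y / 2)) ^ (-(2 * d)) := by
    rw [← ht_eq, ← Real.rpow_two, ← Real.rpow_mul hs.le, mul_neg]
  calc _ = ∫ x in Ioo 0 1,
          J⁻¹ * t ^ (-d) * ((1 - x) * (1 + x) / (x ^ 2 * t) * betaKernel d (farimaSubst t x)) :=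
        setIntegral_congr_fun measurableSet_Ioo fun x hx => by
          rw [norm_one_sub_mul_exp_mul_I_sq, ht_eq, mul_assoc J⁻¹ (t ^ (-d)),
            ← mixing_integrand_eq ht hx]
          ring
    _ = J⁻¹ * t ^ (-d) * J := by
        rw [integral_const_mul, ← integral_Ioi_eq_integral_farimaSubst ht]
    _ = (2 * Real.sin (y / 2)) ^ (-(2 * d)) := by
        rw [mul_right_comm, inv_mul_cancel₀ hJ.ne', one_mul, htd]
end

section
/- Let φ be a probability density on [0,1) satisfying φ(a) ~ φ₁(1-a)^β as a→1⁻ with φ₁ > 0 and 0 < β < 1. Define f₄(x,y) = ∫₀¹ φ(a)/(1 - (a/2)(cos x + cos y))² da for (x,y) ∈ [-π,π]² \ {(0,0)}. Then there exists a constant C > 0 such that (x²+y²)^{1-β} f₄(x,y) → C as (x,y) → (0,0) with (x,y) ≠ (0,0). -/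
/-!
Put `e = 1 - (cos x + cos y) / 2`, so that the denominator is `((1 - a) + a e)²` and
`e ~ (x² + y²) / 4` at the origin. It then suffices to show
`e^(1-β) ∫₀¹ φ(a) / ((1 - a) + a e)² da → φ₁ ∫₀^∞ u^β / (1 + u)² du` as `e → 0⁺`,
and `C = 4^(1-β) φ₁ ∫₀^∞ u^β / (1 + u)² du`.
On `[0, 1 - δ)` the integrand is at most `|φ| / δ²`, which the factor `e^(1-β)` kills. On
`[1 - δ, 1)` the substitution `1 - a = e u` gives `∫ e^(-β) φ(1 - e u) / (1 + (1 - e) u)² du`,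
which converges by dominated convergence: near `1` the asymptotics give
`|φ(a)| ≤ 2 φ₁ (1 - a)^β`, hence the dominating function `8 φ₁ u^β / (1 + u)²`.
-/

open MeasureTheory Filter Topology Set Real

theorem integrableOn_rpow_div_one_add_sq {β : ℝ} (hβ0 : -1 < β) (hβ1 : β < 1) :
    IntegrableOn (fun u : ℝ => u ^ β / (1 + u) ^ 2) (Ioi 0) := by
  have hmeas : AEStronglyMeasurable (fun u : ℝ => u ^ β / (1 + u) ^ 2) :=
    (measurable_id.pow_const β |>.div (by fun_prop)).aestronglyMeasurable
  rw [← Ioc_union_Ioi_eq_Ioi zero_le_one]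
  refine IntegrableOn.union ?_ ?_
  · refine Integrable.mono' ((intervalIntegral.intervalIntegrable_rpow' hβ0).1) hmeas.restrict ?_
    filter_upwards [ae_restrict_mem measurableSet_Ioc] with u hu
    have hu0 : 0 < u := hu.1
    rw [norm_of_nonneg (by positivity)]
    exact div_le_self (by positivity) (one_le_pow₀ (by linarith))
  · refine Integrable.mono' (integrableOn_Ioi_rpow_of_lt (by linarith : β - 2 < -1) one_pos)
      hmeas.restrict ?_
    filter_upwards [ae_restrict_mem measurableSet_Ioi] with u (hu : 1 < u)
    have hu0 : 0 < u := one_pos.trans hu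
    rw [norm_of_nonneg (by positivity), rpow_sub hu0, rpow_two]
    gcongr
    linarith

theorem integral_rpow_div_one_add_sq_pos {β : ℝ} (hβ0 : -1 < β) (hβ1 : β < 1) :
    0 < ∫ u in Ioi (0:ℝ), u ^ β / (1 + u) ^ 2 := by
  have hpos : ∀ u ∈ Ioi (0:ℝ), 0 < u ^ β / (1 + u) ^ 2 := fun u (hu : 0 < u) => by positivity
  rw [setIntegral_pos_iff_support_of_nonneg_ae
    ((ae_restrict_iff' measurableSet_Ioi).2 (.of_forall fun u hu => (hpos u hu).le))
    (integrableOn_rpow_div_one_add_sq hβ0 hβ1),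
    inter_eq_right.2 fun u hu => Function.mem_support.2 (hpos u hu).ne']
  simp

theorem exists_abs_le_mul_rpow_of_tendsto_div {φ : ℝ → ℝ} {c β : ℝ} (hc : 0 < c)
    (h : Tendsto (fun a => φ a / (c * (1 - a) ^ β)) (𝓝[<] 1) (𝓝 1)) :
    ∃ δ, 0 < δ ∧ δ ≤ 1 ∧ ∀ a ∈ Ico (1 - δ) 1, |φ a| ≤ 2 * c * (1 - a) ^ β := by
  obtain ⟨l, hl, hsub⟩ := mem_nhdsLT_iff_exists_Ico_subset.1
    (h.norm.eventually (gt_mem_nhds (by norm_num : ‖(1:ℝ)‖ < 2)))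
  refine ⟨min (1 - l) 1, lt_min (by linarith [mem_Iio.1 hl]) one_pos, min_le_right _ _,
    fun a ha => ?_⟩
  have hpos : 0 < c * (1 - a) ^ β := mul_pos hc (rpow_pos_of_pos (by linarith [ha.2]) _)
  have hratio : |φ a / (c * (1 - a) ^ β)| < 2 :=
    hsub ⟨by linarith [ha.1, min_le_left (1 - l) 1], ha.2⟩
  rw [abs_div, abs_of_pos hpos, div_lt_iff₀ hpos] at hratio
  linarith

theorem abs_rpow_neg_mul_div_sq_le {ε u β K y : ℝ} (hε : 0 < ε) (hε2 : ε ≤ 1 / 2) (hu : 0 < u)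
    (hy : |y| ≤ K * (ε * u) ^ β) :
    |ε ^ (-β) * y / (1 + (1 - ε) * u) ^ 2| ≤ 4 * K * (u ^ β / (1 + u) ^ 2) := by
  have hεβ : 0 < ε ^ β := rpow_pos_of_pos hε β
  have hden : (1 + u) / 2 ≤ 1 + (1 - ε) * u := by nlinarith
  rw [mul_rpow hε.le hu.le] at hy
  have hK : 0 ≤ K := by
    by_contra! hK
    nlinarith [abs_nonneg y, mul_pos hεβ (rpow_pos_of_pos hu β)]
  rw [abs_div, abs_mul, abs_of_pos (rpow_pos_of_pos hε _),
    abs_of_nonneg (sq_nonneg (1 + (1 - ε) * u)), rpow_neg hε.le]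
  calc (ε ^ β)⁻¹ * |y| / (1 + (1 - ε) * u) ^ 2
      ≤ (ε ^ β)⁻¹ * (K * (ε ^ β * u ^ β)) / ((1 + u) / 2) ^ 2 := by gcongr
    _ = 4 * K * (u ^ β / (1 + u) ^ 2) := by field_simp; ring

theorem tendsto_rpow_neg_mul_div_sq {φ : ℝ → ℝ} {c β u : ℝ} (hc : c ≠ 0)
    (hasymp : Tendsto (fun a => φ a / (c * (1 - a) ^ β)) (𝓝[<] 1) (𝓝 1)) (hu : 0 < u) :
    Tendsto (fun ε => ε ^ (-β) * φ (1 - ε * u) / (1 + (1 - ε) * u) ^ 2) (𝓝[>] 0)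
      (𝓝 (c * (u ^ β / (1 + u) ^ 2))) := by
  have harg : Tendsto (fun ε => 1 - ε * u) (𝓝[>] 0) (𝓝[<] 1) := by
    refine tendsto_nhdsWithin_iff.2 ⟨tendsto_nhdsWithin_of_tendsto_nhds ?_, ?_⟩
    · simpa using (by fun_prop : Continuous fun ε : ℝ => 1 - ε * u).tendsto 0
    · filter_upwards [self_mem_nhdsWithin] with ε (hε : 0 < ε)
      simpa using mul_pos hε hu
  have hratio : Tendsto (fun ε => φ (1 - ε * u) / (c * (ε * u) ^ β)) (𝓝[>] 0) (𝓝 1) := by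
    simpa [Function.comp_def] using hasymp.comp harg
  have hden : Tendsto (fun ε : ℝ => (1 + (1 - ε) * u) ^ 2) (𝓝[>] 0) (𝓝 ((1 + u) ^ 2)) :=
    tendsto_nhdsWithin_of_tendsto_nhds (by simpa using (by fun_prop :
      Continuous fun ε : ℝ => (1 + (1 - ε) * u) ^ 2).tendsto 0)
  have hlim := (hratio.mul_const (c * u ^ β)).div hden (by positivity)
  rw [one_mul, mul_div_assoc] at hlim
  refine hlim.congr' ?_
  filter_upwards [self_mem_nhdsWithin] with ε (hε : 0 < ε)
  rw [Pi.div_apply, mul_rpow hε.le hu.le, rpow_neg hε.le]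
  field_simp

theorem tendsto_setIntegral_rpow_neg_mul_div_sq {φ : ℝ → ℝ} {c β δ K : ℝ} (hc : c ≠ 0)
    (hβ0 : -1 < β) (hβ1 : β < 1) (hδ : 0 < δ) (hφ : Measurable φ)
    (hbound : ∀ a ∈ Ico (1 - δ) 1, |φ a| ≤ K * (1 - a) ^ β)
    (hasymp : Tendsto (fun a => φ a / (c * (1 - a) ^ β)) (𝓝[<] 1) (𝓝 1)) :
    Tendsto (fun ε => ∫ u in Ioc 0 (δ / ε), ε ^ (-β) * φ (1 - ε * u) / (1 + (1 - ε) * u) ^ 2)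
      (𝓝[>] 0) (𝓝 (c * ∫ u in Ioi 0, u ^ β / (1 + u) ^ 2)) := by
  set f := fun ε u : ℝ => ε ^ (-β) * φ (1 - ε * u) / (1 + (1 - ε) * u) ^ 2
  have hK : 0 ≤ K := by
    have h := (abs_nonneg _).trans (hbound (1 - δ) ⟨le_rfl, by linarith⟩)
    rw [sub_sub_cancel] at h
    exact nonneg_of_mul_nonneg_left h (rpow_pos_of_pos hδ β)
  have hind : ∀ ε, ∫ u in Ioc 0 (δ / ε), f ε u = ∫ u in Ioi 0, (Iic (δ / ε)).indicator (f ε) u :=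
    fun ε => by rw [setIntegral_indicator measurableSet_Iic, Ioi_inter_Iic]
  refine Tendsto.congr (fun ε => (hind ε).symm) ?_
  rw [← integral_const_mul]
  refine tendsto_integral_filter_of_dominated_convergence (fun u => 4 * K * (u ^ β / (1 + u) ^ 2))
    (.of_forall fun ε => ((by fun_prop : Measurable (f ε)).indicator
      measurableSet_Iic).aestronglyMeasurable) ?_
    ((integrableOn_rpow_div_one_add_sq hβ0 hβ1).const_mul _) ?_
  · filter_upwards [Ioc_mem_nhdsGT (by norm_num : (0:ℝ) < 1 / 2)] with ε ⟨hε, hε2⟩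
    filter_upwards [ae_restrict_mem measurableSet_Ioi] with u (hu : 0 < u)
    by_cases huδ : u ∈ Iic (δ / ε)
    · have hεu : ε * u ≤ δ := by rwa [mem_Iic, le_div_iff₀ hε, mul_comm] at huδ
      have h := hbound (1 - ε * u) ⟨by linarith, by linarith [mul_pos hε hu]⟩
      rw [sub_sub_cancel] at h
      rw [indicator_of_mem huδ]
      exact abs_rpow_neg_mul_div_sq_le hε hε2 hu h
    · rw [indicator_of_notMem huδ, norm_zero]
      positivity
  · filter_upwards [ae_restrict_mem measurableSet_Ioi] with u (hu : 0 < u)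
    refine (tendsto_rpow_neg_mul_div_sq hc hasymp hu).congr' ?_
    filter_upwards [Ioo_mem_nhdsGT (div_pos hδ hu)] with ε ⟨hε, hεu⟩
    have huδ : u ∈ Iic (δ / ε) := by
      rw [mem_Iic, le_div_iff₀ hε, mul_comm]
      exact ((lt_div_iff₀ hu).1 hεu).le
    rw [indicator_of_mem huδ]

theorem setIntegral_Ico_one_sub_eq_mul_setIntegral_Ioc {g : ℝ → ℝ} {c δ : ℝ} (hc : 0 < c)
    (hδ : 0 ≤ δ) :
    ∫ a in Ico (1 - δ) 1, g a = c * ∫ u in Ioc 0 (δ / c), g (1 - c * u) := by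
  have h := intervalIntegral.integral_comp_sub_mul (a := 0) (b := δ / c) g hc.ne' 1
  rw [mul_div_cancel₀ _ hc.ne', mul_zero, sub_zero,
    intervalIntegral.integral_of_le (div_nonneg hδ hc.le),
    intervalIntegral.integral_of_le (by linarith)] at h
  rw [integral_Ico_eq_integral_Ioc, h, smul_eq_mul, mul_inv_cancel_left₀ hc.ne']

theorem tendsto_rpow_mul_setIntegral_Ico_one_sub_div_sq {φ : ℝ → ℝ} {c β δ K : ℝ} (hc : c ≠ 0)
    (hβ0 : -1 < β) (hβ1 : β < 1) (hδ : 0 < δ) (hφ : Measurable φ)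
    (hbound : ∀ a ∈ Ico (1 - δ) 1, |φ a| ≤ K * (1 - a) ^ β)
    (hasymp : Tendsto (fun a => φ a / (c * (1 - a) ^ β)) (𝓝[<] 1) (𝓝 1)) :
    Tendsto (fun ε => ε ^ (1 - β) * ∫ a in Ico (1 - δ) 1, φ a / ((1 - a) + a * ε) ^ 2)
      (𝓝[>] 0) (𝓝 (c * ∫ u in Ioi 0, u ^ β / (1 + u) ^ 2)) := by
  refine (tendsto_setIntegral_rpow_neg_mul_div_sq hc hβ0 hβ1 hδ hφ hbound hasymp).congr' ?_
  filter_upwards [self_mem_nhdsWithin] with ε (hε : 0 < ε)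
  rw [setIntegral_Ico_one_sub_eq_mul_setIntegral_Ioc hε hδ.le, ← mul_assoc, ← integral_const_mul]
  refine setIntegral_congr_fun measurableSet_Ioc fun u _ => ?_
  rw [rpow_sub hε, rpow_one, rpow_neg hε.le,
    show 1 - (1 - ε * u) + (1 - ε * u) * ε = ε * (1 + (1 - ε) * u) by ring]
  field_simp

theorem norm_setIntegral_Ico_zero_one_sub_div_sq_le {φ : ℝ → ℝ} {δ ε : ℝ}
    (hφ : IntegrableOn φ (Ico 0 (1 - δ))) (hδ : 0 < δ) (hε : 0 ≤ ε) :
    ‖∫ a in Ico 0 (1 - δ), φ a / ((1 - a) + a * ε) ^ 2‖ ≤ ∫ a in Ico 0 (1 - δ), ‖φ a‖ / δ ^ 2 := by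
  refine norm_integral_le_of_norm_le (hφ.norm.div_const _) ?_
  filter_upwards [ae_restrict_mem measurableSet_Ico] with a ⟨ha0, ha1⟩
  have hden : δ ≤ (1 - a) + a * ε := by nlinarith
  rw [norm_div, norm_pow, Real.norm_of_nonneg (hδ.le.trans hden)]
  gcongr

theorem integrableOn_div_one_sub_add_mul_sq {φ : ℝ → ℝ} {ε : ℝ}
    (hφ : IntegrableOn φ (Ico 0 1)) (hε : 0 < ε) :
    IntegrableOn (fun a => φ a / ((1 - a) + a * ε) ^ 2) (Ico 0 1) := by
  have hm : 0 < min ε 1 := lt_min hε one_pos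
  refine Integrable.mono' (hφ.norm.div_const (min ε 1 ^ 2))
    (hφ.aestronglyMeasurable.div₀ (by fun_prop : Continuous fun a : ℝ =>
      ((1 - a) + a * ε) ^ 2).aestronglyMeasurable) ?_
  filter_upwards [ae_restrict_mem measurableSet_Ico] with a ⟨ha0, ha1⟩
  have hden : min ε 1 ≤ (1 - a) + a * ε := by
    nlinarith [min_le_left ε 1, min_le_right ε 1]
  rw [norm_div, norm_pow, Real.norm_of_nonneg (hm.le.trans hden)]
  gcongr

theorem tendsto_rpow_mul_setIntegral_Ico_zero_one_div_sq {φ : ℝ → ℝ} {c β : ℝ} (hc : 0 < c)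
    (hβ0 : -1 < β) (hβ1 : β < 1) (hφ : Measurable φ) (hint : IntegrableOn φ (Ico 0 1))
    (hasymp : Tendsto (fun a => φ a / (c * (1 - a) ^ β)) (𝓝[<] 1) (𝓝 1)) :
    Tendsto (fun ε => ε ^ (1 - β) * ∫ a in Ico 0 1, φ a / ((1 - a) + a * ε) ^ 2)
      (𝓝[>] 0) (𝓝 (c * ∫ u in Ioi 0, u ^ β / (1 + u) ^ 2)) := by
  obtain ⟨δ, hδ0, hδ1, hbound⟩ := exists_abs_le_mul_rpow_of_tendsto_div hc hasymp
  have hsub : Ico 0 (1 - δ) ⊆ Ico 0 1 := Ico_subset_Ico_right (by linarith)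
  have hpow : Tendsto (fun ε : ℝ => ε ^ (1 - β)) (𝓝[>] 0) (𝓝 0) :=
    tendsto_nhdsWithin_of_tendsto_nhds (by
      simpa [zero_rpow (by linarith : 1 - β ≠ 0)] using
        (continuousAt_rpow_const 0 (1 - β) (Or.inr (by linarith))).tendsto)
  have hhead : Tendsto (fun ε => ε ^ (1 - β) * ∫ a in Ico 0 (1 - δ), φ a / ((1 - a) + a * ε) ^ 2)
      (𝓝[>] 0) (𝓝 0) :=
    hpow.zero_mul_isBoundedUnder_le <| isBoundedUnder_of_eventually_le <|
      eventually_mem_nhdsWithin.mono fun ε (hε : 0 < ε) =>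
        norm_setIntegral_Ico_zero_one_sub_div_sq_le (hint.mono_set hsub) hδ0 hε.le
  have htail :=
    tendsto_rpow_mul_setIntegral_Ico_one_sub_div_sq hc.ne' hβ0 hβ1 hδ0 hφ hbound hasymp
  rw [← zero_add (c * _)]
  refine (hhead.add htail).congr' ?_
  filter_upwards [self_mem_nhdsWithin] with ε (hε : 0 < ε)
  have hI := integrableOn_div_one_sub_add_mul_sq hint hε
  rw [← mul_add, ← setIntegral_union Ico_disjoint_Ico_same measurableSet_Ico (hI.mono_set hsub)
    (hI.mono_set (Ico_subset_Ico_left (by linarith))),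
    Ico_union_Ico_eq_Ico (by linarith) (by linarith)]

theorem abs_one_sub_cos_add_cos_div_two_sub_le {x y : ℝ} (hx : |x| ≤ 1) (hy : |y| ≤ 1) :
    |1 - (cos x + cos y) / 2 - (x ^ 2 + y ^ 2) / 4| ≤ (x ^ 2 + y ^ 2) ^ 2 / 32 := by
  have hcx := cos_bound hx
  have hcy := cos_bound hy
  rw [show |x| ^ 4 = (x ^ 2) ^ 2 by rw [← sq_abs x]; ring] at hcx
  rw [show |y| ^ 4 = (y ^ 2) ^ 2 by rw [← sq_abs y]; ring] at hcy
  calc |1 - (cos x + cos y) / 2 - (x ^ 2 + y ^ 2) / 4|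
      = |(cos x - (1 - x ^ 2 / 2)) + (cos y - (1 - y ^ 2 / 2))| / 2 := by
        rw [← abs_neg, show (2:ℝ) = |2| by norm_num, ← abs_div]; ring_nf
    _ ≤ (|cos x - (1 - x ^ 2 / 2)| + |cos y - (1 - y ^ 2 / 2)|) / 2 := by
        gcongr; exact abs_add_le _ _
    _ ≤ (x ^ 2 + y ^ 2) ^ 2 / 32 := by
        nlinarith [sq_nonneg x, sq_nonneg y, mul_nonneg (sq_nonneg x) (sq_nonneg y)]

theorem eventually_sq_add_sq_pos :
    ∀ᶠ p : ℝ × ℝ in 𝓝[≠] (0, 0), 0 < p.1 ^ 2 + p.2 ^ 2 := by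
  filter_upwards [self_mem_nhdsWithin] with p hp
  have : p.1 ≠ 0 ∨ p.2 ≠ 0 := by
    contrapose! hp
    simpa [Prod.ext_iff] using hp
  rcases this with h | h <;> positivity

theorem tendsto_one_sub_cos_add_cos_div_two_div_sq_add_sq :
    Tendsto (fun p : ℝ × ℝ => (1 - (cos p.1 + cos p.2) / 2) / (p.1 ^ 2 + p.2 ^ 2))
      (𝓝[≠] (0, 0)) (𝓝 (1 / 4)) := by
  have hs : Tendsto (fun p : ℝ × ℝ => p.1 ^ 2 + p.2 ^ 2) (𝓝[≠] (0, 0)) (𝓝 0) :=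
    tendsto_nhdsWithin_of_tendsto_nhds (by simpa using (by fun_prop :
      Continuous fun p : ℝ × ℝ => p.1 ^ 2 + p.2 ^ 2).tendsto ((0, 0) : ℝ × ℝ))
  rw [tendsto_iff_norm_sub_tendsto_zero]
  refine squeeze_zero_norm' ?_ (by simpa using hs.div_const 32)
  filter_upwards [eventually_sq_add_sq_pos,
    nhdsWithin_le_nhds (Metric.ball_mem_nhds ((0, 0) : ℝ × ℝ) one_pos)] with p hpos hp
  replace hp : ‖p‖ < 1 := mem_ball_zero_iff.1 hp
  rw [norm_norm, norm_eq_abs, div_sub' hpos.ne', abs_div, abs_of_pos hpos,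
    div_le_div_iff₀ hpos (by norm_num)]
  have h := abs_one_sub_cos_add_cos_div_two_sub_le
    ((norm_fst_le p).trans hp.le) ((norm_snd_le p).trans hp.le)
  rw [mul_one_div, ← sq]
  linarith

theorem tendsto_one_sub_cos_add_cos_div_two_nhdsGT :
    Tendsto (fun p : ℝ × ℝ => 1 - (cos p.1 + cos p.2) / 2) (𝓝[≠] (0, 0)) (𝓝[>] 0) := by
  refine tendsto_nhdsWithin_iff.2 ⟨tendsto_nhdsWithin_of_tendsto_nhds ?_, ?_⟩
  · simpa using (by fun_prop : Continuous fun p : ℝ × ℝ => 1 - (cos p.1 + cos p.2) / 2).tendsto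
      ((0, 0) : ℝ × ℝ)
  · filter_upwards [eventually_sq_add_sq_pos,
      tendsto_one_sub_cos_add_cos_div_two_div_sq_add_sq.eventually
        (lt_mem_nhds (by norm_num : (0:ℝ) < 1 / 4))] with p hs hq
    exact (div_pos_iff_of_pos_right hs).1 hq

theorem aggregated_4N_field_spectral_density_asymptotics_general
    (φ : ℝ → ℝ) (φ1 β : ℝ) (hφ1 : 0 < φ1) (hβ0 : 0 < β) (hβ1 : β < 1)
    (hmeas : Measurable φ)
    (hprob : ∫ a in Set.Ico (0:ℝ) 1, φ a = 1)
    (hasymp : Tendsto (fun a => φ a / (φ1 * (1 - a) ^ β)) (𝓝[<] (1:ℝ)) (𝓝 1)) :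
    ∃ C : ℝ, 0 < C ∧
      Tendsto (fun p : ℝ × ℝ =>
          (p.1 ^ 2 + p.2 ^ 2) ^ ((1:ℝ) - β) *
            ∫ a in Set.Ico (0:ℝ) 1, φ a / (1 - a / 2 * (Real.cos p.1 + Real.cos p.2)) ^ 2)
        (𝓝[≠] ((0, 0) : ℝ × ℝ)) (𝓝 C) := by
  have hint : IntegrableOn φ (Ico 0 1) := Integrable.of_integral_ne_zero (by simp [hprob])
  have hkey := (tendsto_rpow_mul_setIntegral_Ico_zero_one_div_sq hφ1 (by linarith) hβ1 hmeas
    hint hasymp).comp tendsto_one_sub_cos_add_cos_div_two_nhdsGT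
  have hratio : Tendsto (fun p : ℝ × ℝ => ((p.1 ^ 2 + p.2 ^ 2) / (1 - (cos p.1 + cos p.2) / 2))
      ^ (1 - β)) (𝓝[≠] (0, 0)) (𝓝 (4 ^ (1 - β))) := by
    simpa using (tendsto_one_sub_cos_add_cos_div_two_div_sq_add_sq.inv₀ (by norm_num)).rpow_const
      (Or.inl (by norm_num))
  refine ⟨4 ^ (1 - β) * (φ1 * ∫ u in Ioi 0, u ^ β / (1 + u) ^ 2),
    mul_pos (by positivity) (mul_pos hφ1 (integral_rpow_div_one_add_sq_pos (by linarith) hβ1)),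
    (hratio.mul hkey).congr' ?_⟩
  filter_upwards [eventually_sq_add_sq_pos,
    tendsto_one_sub_cos_add_cos_div_two_nhdsGT self_mem_nhdsWithin] with p hs he
  replace he : 0 < 1 - (cos p.1 + cos p.2) / 2 := he
  have hden : ∀ a : ℝ, (1 - a) + a * (1 - (cos p.1 + cos p.2) / 2)
      = 1 - a / 2 * (cos p.1 + cos p.2) := fun a => by ring
  simp only [Function.comp_apply, hden, div_rpow hs.le he.le]
  rw [← mul_assoc, div_mul_cancel₀ _ (rpow_pos_of_pos he _).ne']

/-- Isotropic power-law singularity of the aggregated 4N autoregressive random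
field spectral density: with `f₄(x,y) = ∫₀¹ φ(a)/(1 - (a/2)(cos x + cos y))² da`
and `φ(a) ~ φ₁ (1-a)^β` as `a → 1⁻`, `0 < β < 1`, there exists `C > 0` such that
`(x²+y²)^{1-β} f₄(x,y) → C` as `(x,y) → (0,0)`, `(x,y) ≠ (0,0)`. -/
theorem aggregated_4N_field_spectral_density_asymptotics
    (φ : ℝ → ℝ) (φ1 β : ℝ) (hφ1 : 0 < φ1) (hβ0 : 0 < β) (hβ1 : β < 1)
    (hmeas : Measurable φ)
    (hnonneg : ∀ a ∈ Set.Ico (0:ℝ) 1, 0 ≤ φ a)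
    (hprob : ∫ a in Set.Ico (0:ℝ) 1, φ a = 1)
    (hasymp : Tendsto (fun a => φ a / (φ1 * (1 - a) ^ β)) (𝓝[<] (1:ℝ)) (𝓝 1)) :
    ∃ C : ℝ, 0 < C ∧
      Tendsto (fun p : ℝ × ℝ =>
          (p.1 ^ 2 + p.2 ^ 2) ^ ((1:ℝ) - β) *
            ∫ a in Set.Ico (0:ℝ) 1, φ a / (1 - a / 2 * (Real.cos p.1 + Real.cos p.2)) ^ 2)
        (𝓝[≠] ((0, 0) : ℝ × ℝ)) (𝓝 C) :=
  aggregated_4N_field_spectral_density_asymptotics_general φ φ1 β hφ1 hβ0 hβ1 hmeas hprob hasymp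
end
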